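/- arXiv:2111.09291 — 7 statements merged into one kernel-verified Lean document; each statement's English description precedes it below -/
import Mathlib

section
/- Let u : ℝ → ℂ be continuously differentiable with u(α) ≠ 0 for every α ∈ ℝ. Then the functions 1/|u| and ω := u/|u| are differentiable, and for every α ∈ ℝ one has the decomposition ω(α)·(1/u)'(α) = (1/|u|)'(α) + ω(α)·(1/|u(α)|)·(d/dα)(conj(ω))(α), where (1/|u|)'(α) is real and ω(α)·(1/|u(α)|)·(d/dα)(conj(ω))(α) is purely imaginary; in particular Re(ω(α)·(1/u)'(α)) = (1/|u|)'(α) and |(1/u)'(α)|² = |(1/|u|)'(α)|² + |u(α)|^{-2}·|(d/dα)ω(α)|² for every α. Consequently, ‖(1/|u|)'‖_{L²(ℝ)} + ‖|u|^{-1}·ω'‖_{L²(ℝ)} ≤ 2‖(1/u)'‖_{L²(ℝ)}. -/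
/-!
Write `r = ‖u‖` and `ω = u / r`. Since `1/u = r⁻¹ · conj ω`, the product rule and `ω · conj ω = 1`
give `ω · (1/u)' = (1/r)' + ω · r⁻¹ · (conj ω)'`. Because `‖ω‖ ≡ 1`, differentiating `‖ω‖²` shows
that `ω'` is orthogonal to `ω`, i.e. the second summand is purely imaginary. Taking norms then
yields the Pythagorean identity `‖(1/u)'‖² = ((1/r)')² + r⁻² ‖ω'‖²`, so each of the two
functions on the left of the `L²` bound is pointwise dominated by `‖(1/u)'‖`.
-/

open MeasureTheory Complex ComplexConjugate Filter Topology

theorem inner_deriv_eq_zero_of_eventually_norm_eq {F : Type*} [NormedAddCommGroup F]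
    [InnerProductSpace ℝ F] {f : ℝ → F} {x c : ℝ} (hf : DifferentiableAt ℝ f x)
    (hc : ∀ᶠ y in 𝓝 x, ‖f y‖ = c) :
    inner ℝ (f x) (deriv f x) = 0 := by
  have h0 : HasDerivAt (‖f ·‖ ^ 2) 0 x :=
    (hasDerivAt_const x (c ^ 2)).congr_of_eventuallyEq (hc.mono fun y hy => by simp [hy])
  simpa using hf.hasDerivAt.norm_sq.unique h0

theorem Complex.sq_norm_ofReal_add_of_re_eq_zero (a : ℝ) {z : ℂ} (hz : z.re = 0) :
    ‖(a : ℂ) + z‖ ^ 2 = a ^ 2 + ‖z‖ ^ 2 := by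
  simp only [Complex.sq_norm, normSq_apply, add_re, add_im, ofReal_re, ofReal_im, hz]
  ring

theorem eLpNorm_add_eLpNorm_le_two_mul_of_sq_norm_eq {α E F G : Type*} [MeasurableSpace α]
    {μ : Measure α} {p : ENNReal} [NormedAddCommGroup E] [NormedAddCommGroup F]
    [NormedAddCommGroup G] {f : α → E} {g : α → F} {h : α → G}
    (hfgh : ∀ a, ‖f a‖ ^ 2 = ‖g a‖ ^ 2 + ‖h a‖ ^ 2) :
    eLpNorm g p μ + eLpNorm h p μ ≤ 2 * eLpNorm f p μ := by
  rw [two_mul]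
  refine add_le_add (eLpNorm_mono fun a => ?_) (eLpNorm_mono fun a => ?_) <;>
    refine (sq_le_sq₀ (norm_nonneg _) (norm_nonneg _)).1 ?_ <;>
    linarith [hfgh a, sq_nonneg ‖g a‖, sq_nonneg ‖h a‖]

section
variable {f : ℝ → ℂ} {x : ℝ}

theorem inv_eq_inv_norm_mul_conj_div_norm (z : ℂ) : z⁻¹ = ((‖z‖⁻¹ : ℝ) : ℂ) * conj (z / ‖z‖) := by
  rcases eq_or_ne z 0 with rfl | hz
  · simp
  rw [map_div₀, conj_ofReal, inv_def, normSq_eq_norm_sq]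
  push_cast
  field_simp

theorem norm_div_norm_eq_one {z : ℂ} (hz : z ≠ 0) : ‖z / ‖z‖‖ = 1 := by
  rw [norm_div, norm_real, norm_norm, div_self (norm_ne_zero_iff.2 hz)]

theorem div_norm_mul_conj_div_norm {z : ℂ} (hz : z ≠ 0) : z / ‖z‖ * conj (z / ‖z‖) = 1 := by
  rw [mul_conj, normSq_eq_norm_sq, norm_div_norm_eq_one hz]
  simp

theorem DifferentiableAt.inv_norm (hf : DifferentiableAt ℝ f x) (h0 : f x ≠ 0) :
    DifferentiableAt ℝ (fun y => ‖f y‖⁻¹) x :=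
  (hf.norm ℝ h0).inv (norm_ne_zero_iff.2 h0)

theorem DifferentiableAt.div_norm (hf : DifferentiableAt ℝ f x) (h0 : f x ≠ 0) :
    DifferentiableAt ℝ (fun y => f y / (‖f y‖ : ℂ)) x :=
  hf.div (hf.norm ℝ h0).hasDerivAt.ofReal_comp.differentiableAt (by simpa using h0)

theorem deriv_conj : deriv (fun y => conj (f y)) x = conj (deriv f x) := deriv.star

theorem div_norm_mul_deriv_inv (hf : DifferentiableAt ℝ f x) (h0 : f x ≠ 0) :
    f x / ‖f x‖ * deriv (fun y => (f y)⁻¹) x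
      = ((deriv (fun y => ‖f y‖⁻¹) x : ℝ) : ℂ)
        + f x / ‖f x‖ * (‖f x‖ : ℂ)⁻¹ * deriv (fun y => conj (f y / ‖f y‖)) x := by
  have hω : HasDerivAt (fun y => conj (f y / ‖f y‖))
      (conj (deriv (fun y => f y / ‖f y‖) x)) x := (hf.div_norm h0).hasDerivAt.star
  have hr := (hf.inv_norm h0).hasDerivAt.ofReal_comp
  have hinv : (fun y => (f y)⁻¹) = fun y => ((‖f y‖⁻¹ : ℝ) : ℂ) * conj (f y / ‖f y‖) :=
    funext fun y => inv_eq_inv_norm_mul_conj_div_norm (f y)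
  rw [hinv, (hr.fun_mul hω).deriv, hω.deriv]
  linear_combination (norm := (push_cast; ring))
    ((deriv (fun y => ‖f y‖⁻¹) x : ℝ) : ℂ) * div_norm_mul_conj_div_norm h0

theorem re_div_norm_mul_inv_norm_mul_deriv_conj (hf : DifferentiableAt ℝ f x) (h0 : f x ≠ 0) :
    (f x / ‖f x‖ * (‖f x‖ : ℂ)⁻¹ * deriv (fun y => conj (f y / ‖f y‖)) x).re = 0 := by
  have hω1 : ∀ᶠ y in 𝓝 x, ‖f y / ‖f y‖‖ = 1 :=
    (hf.continuousAt.eventually_ne h0).mono fun y hy => norm_div_norm_eq_one hy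
  have h : (f x / ‖f x‖ * conj (deriv (fun y => f y / ‖f y‖) x)).re = 0 := by
    rw [← Complex.inner, real_inner_comm]
    exact inner_deriv_eq_zero_of_eventually_norm_eq (hf.div_norm h0) hω1
  rw [deriv_conj, mul_right_comm, ← ofReal_inv, re_mul_ofReal, h, zero_mul]

theorem re_div_norm_mul_deriv_inv (hf : DifferentiableAt ℝ f x) (h0 : f x ≠ 0) :
    (f x / ‖f x‖ * deriv (fun y => (f y)⁻¹) x).re = deriv (fun y => ‖f y‖⁻¹) x := by
  rw [div_norm_mul_deriv_inv hf h0, add_re, ofReal_re,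
    re_div_norm_mul_inv_norm_mul_deriv_conj hf h0, add_zero]

theorem sq_norm_deriv_inv (hf : DifferentiableAt ℝ f x) (h0 : f x ≠ 0) :
    ‖deriv (fun y => (f y)⁻¹) x‖ ^ 2
      = |deriv (fun y => ‖f y‖⁻¹) x| ^ 2
        + (‖f x‖⁻¹) ^ 2 * ‖deriv (fun y => f y / (‖f y‖ : ℂ)) x‖ ^ 2 := by
  have hω1 := norm_div_norm_eq_one h0
  rw [← one_mul ‖deriv _ x‖, ← hω1, ← norm_mul, div_norm_mul_deriv_inv hf h0,
    sq_norm_ofReal_add_of_re_eq_zero _ (re_div_norm_mul_inv_norm_mul_deriv_conj hf h0),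
    sq_abs, deriv_conj, norm_mul, norm_mul, hω1, RCLike.norm_conj, norm_inv, norm_real, norm_norm]
  ring

end

/-- For `u : ℝ → ℂ` continuously differentiable and nowhere vanishing,
the functions `1/|u|` and `ω = u/|u|` are differentiable, the derivative of `1/u`
(multiplied by `ω`) decomposes into a real part `(1/|u|)'` and a purely imaginary part
`ω · |u|⁻¹ · (conj ω)'`, with the pointwise Pythagorean identity, and the `L²` bound
`‖(1/|u|)'‖₂ + ‖|u|⁻¹ ω'‖₂ ≤ 2‖(1/u)'‖₂`. -/
theorem statement0 (u : ℝ → ℂ) (hu : ContDiff ℝ 1 u) (hne : ∀ α : ℝ, u α ≠ 0) :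
    Differentiable ℝ (fun α : ℝ => (‖u α‖)⁻¹) ∧
    Differentiable ℝ (fun α : ℝ => u α / (‖u α‖ : ℂ)) ∧
    (∀ α : ℝ,
      (u α / (‖u α‖ : ℂ)) * deriv (fun x : ℝ => (u x)⁻¹) α
        = ((deriv (fun x : ℝ => (‖u x‖)⁻¹) α : ℝ) : ℂ)
          + (u α / (‖u α‖ : ℂ)) * ((‖u α‖ : ℂ))⁻¹
              * deriv (fun x : ℝ => (starRingEnd ℂ) (u x / (‖u x‖ : ℂ))) α) ∧
    (∀ α : ℝ,
      ((u α / (‖u α‖ : ℂ)) * ((‖u α‖ : ℂ))⁻¹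
          * deriv (fun x : ℝ => (starRingEnd ℂ) (u x / (‖u x‖ : ℂ))) α).re = 0) ∧
    (∀ α : ℝ,
      ((u α / (‖u α‖ : ℂ)) * deriv (fun x : ℝ => (u x)⁻¹) α).re
        = deriv (fun x : ℝ => (‖u x‖)⁻¹) α) ∧
    (∀ α : ℝ,
      ‖deriv (fun x : ℝ => (u x)⁻¹) α‖ ^ 2
        = |deriv (fun x : ℝ => (‖u x‖)⁻¹) α| ^ 2
          + ((‖u α‖)⁻¹) ^ 2 * ‖deriv (fun x : ℝ => u x / (‖u x‖ : ℂ)) α‖ ^ 2) ∧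
    eLpNorm (deriv (fun x : ℝ => (‖u x‖)⁻¹)) 2 volume
      + eLpNorm (fun α : ℝ => (‖u α‖)⁻¹ • deriv (fun x : ℝ => u x / (‖u x‖ : ℂ)) α) 2 volume
      ≤ 2 * eLpNorm (deriv (fun x : ℝ => (u x)⁻¹)) 2 volume := by
  have hd : Differentiable ℝ u := hu.differentiable one_ne_zero
  have pythagoras := fun α => sq_norm_deriv_inv (hd α) (hne α)
  refine ⟨fun α => (hd α).inv_norm (hne α), fun α => (hd α).div_norm (hne α),
    fun α => div_norm_mul_deriv_inv (hd α) (hne α),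
    fun α => re_div_norm_mul_inv_norm_mul_deriv_conj (hd α) (hne α),
    fun α => re_div_norm_mul_deriv_inv (hd α) (hne α), pythagoras,
    eLpNorm_add_eLpNorm_le_two_mul_of_sq_norm_eq fun α => ?_⟩
  rw [pythagoras, norm_smul, Real.norm_eq_abs, Real.norm_eq_abs, abs_inv, abs_norm, mul_pow]
end

section
/- Let w ∈ 𝒮(ℝ) be a complex-valued Schwartz function. Then for every α ∈ ℝ both of the following integrals converge absolutely and (2/π)·Re ∫_ℝ ((conj(w(α)) − conj(w(β)))/(α − β))·w'(β) dβ = (1/π) ∫_ℝ |w(α) − w(β)|²/(α − β)² dβ. In particular the left-hand side is nonnegative for every α. -/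
open MeasureTheory Complex Filter Topology SchwartzMap

/-! With `g β = |w(α) − w(β)|² / (α − β)`, one has
`g' β = |w(α) − w(β)|² / (α − β)² − 2 Re (conj (w(α) − w(β)) / (α − β) · w'(β))` for `β ≠ α`.
Lipschitz continuity makes `g` continuous at `α` with `g α = 0` (Lean's `x / 0 = 0` agrees with the
limit), and boundedness makes `g → 0` at `±∞`, so the improper fundamental theorem of calculus on
the two half-lines gives `∫ g' = 0`. -/

theorem integral_of_hasDerivAt_of_ne_of_tendsto {E : Type*} [NormedAddCommGroup E]
    [NormedSpace ℝ E] [CompleteSpace E] {g g' : ℝ → E} {a : ℝ} {m n : E}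
    (hcont : ContinuousAt g a) (hderiv : ∀ x ≠ a, HasDerivAt g (g' x) x)
    (hg' : Integrable g') (hbot : Tendsto g atBot (𝓝 m)) (htop : Tendsto g atTop (𝓝 n)) :
    ∫ x, g' x = n - m := by
  rw [← intervalIntegral.integral_Iic_add_Ioi hg'.integrableOn hg'.integrableOn,
    integral_Iic_of_hasDerivAt_of_tendsto hcont.continuousWithinAt
      (fun x hx => hderiv x hx.ne) hg'.integrableOn hbot,
    integral_Ioi_of_hasDerivAt_of_tendsto hcont.continuousWithinAt
      (fun x hx => hderiv x hx.ne') hg'.integrableOn htop]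
  abel

theorem hasDerivAt_norm_sq_sub_div {f : ℝ → ℂ} {α β : ℝ} (hf : DifferentiableAt ℝ f β)
    (hβ : β ≠ α) :
    HasDerivAt (fun b => ‖f α - f b‖ ^ 2 / (α - b))
      (‖f α - f β‖ ^ 2 / (α - β) ^ 2
        - 2 * ((starRingEnd ℂ (f α) - starRingEnd ℂ (f β)) / ((α - β : ℝ) : ℂ)
            * deriv f β).re) β := by
  have hnum := ((hasDerivAt_const β (f α)).sub hf.hasDerivAt).norm_sq
  have hden := (hasDerivAt_const β α).sub (hasDerivAt_id β)
  refine (hnum.div hden (sub_ne_zero.2 hβ.symm)).congr_deriv ?_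
  simp only [Pi.sub_apply, id]
  rw [Complex.inner, ← map_sub, div_mul_eq_mul_div, Complex.div_ofReal_re, zero_sub, neg_mul,
    neg_re, mul_comm (deriv f β)]
  field_simp
  ring

section Lipschitz

variable {f : ℝ → ℂ} {K : NNReal} {C : ℝ}

theorem norm_sq_sub_le_of_lipschitzWith (hf : LipschitzWith K f) (α β : ℝ) :
    ‖f α - f β‖ ^ 2 ≤ K ^ 2 * (α - β) ^ 2 := by
  rw [← sq_abs (α - β), ← mul_pow]
  gcongr
  exact hf.norm_sub_le α β

theorem norm_sq_sub_div_sq_le_of_lipschitzWith (hf : LipschitzWith K f) (α β : ℝ) :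
    ‖f α - f β‖ ^ 2 / (α - β) ^ 2 ≤ K ^ 2 :=
  div_le_of_le_mul₀ (sq_nonneg _) (sq_nonneg _) (norm_sq_sub_le_of_lipschitzWith hf α β)

theorem integrable_norm_sq_sub_div_sq (hf : LipschitzWith K f) (hC : ∀ x, ‖f x‖ ≤ C) (α : ℝ) :
    Integrable (fun β => ‖f α - f β‖ ^ 2 / (α - β) ^ 2) := by
  refine ((integrable_inv_one_add_sq.comp_sub_right α).const_mul (K ^ 2 + (2 * C) ^ 2)).mono'
    (Measurable.aestronglyMeasurable (by have := hf.continuous.measurable; fun_prop))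
    (.of_forall fun β => ?_)
  have hbdd : ‖f α - f β‖ ^ 2 ≤ (2 * C) ^ 2 := by
    gcongr
    exact (norm_sub_le _ _).trans (by linarith [hC α, hC β])
  rw [Real.norm_of_nonneg (by positivity), ← div_eq_mul_inv, le_div_iff₀ (by positivity)]
  calc ‖f α - f β‖ ^ 2 / (α - β) ^ 2 * (1 + (β - α) ^ 2)
      = ‖f α - f β‖ ^ 2 / (α - β) ^ 2 + ‖f α - f β‖ ^ 2 / (α - β) ^ 2 * (α - β) ^ 2 := by ring
    _ ≤ K ^ 2 + (2 * C) ^ 2 := by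
      gcongr
      · exact norm_sq_sub_div_sq_le_of_lipschitzWith hf α β
      · rw [div_mul_cancel_of_imp fun h => by
          simpa [h] using norm_sq_sub_le_of_lipschitzWith hf α β]
        exact hbdd

theorem integrable_conj_sub_div_mul_deriv (hf : LipschitzWith K f) (hf' : Integrable (deriv f))
    (α : ℝ) :
    Integrable (fun β => (starRingEnd ℂ (f α) - starRingEnd ℂ (f β)) / ((α - β : ℝ) : ℂ)
      * deriv f β) := by
  refine (hf'.norm.const_mul K).mono'
    (Measurable.aestronglyMeasurable (by
      have := hf.continuous.measurable; have := measurable_deriv f; fun_prop))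
    (.of_forall fun β => ?_)
  rw [norm_mul, norm_div, ← map_sub, RCLike.norm_conj, norm_real, Real.norm_eq_abs]
  gcongr
  exact div_le_of_le_mul₀ (abs_nonneg _) K.2 (hf.norm_sub_le α β)

theorem continuousAt_norm_sq_sub_div (hf : LipschitzWith K f) (α : ℝ) :
    ContinuousAt (fun β => ‖f α - f β‖ ^ 2 / (α - β)) α := by
  have hbound (β : ℝ) : ‖‖f α - f β‖ ^ 2 / (α - β)‖ ≤ K ^ 2 * |α - β| := by
    rw [norm_div, norm_pow, norm_norm, Real.norm_eq_abs]
    refine div_le_of_le_mul₀ (abs_nonneg _) (by positivity) ?_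
    rw [mul_assoc, ← sq, sq_abs]
    exact norm_sq_sub_le_of_lipschitzWith hf α β
  have hlim : Tendsto (fun β => K ^ 2 * |α - β|) (𝓝 α) (𝓝 0) := by
    simpa using
      (((continuous_const (y := α)).sub continuous_id).abs.const_mul ((K : ℝ) ^ 2)).tendsto α
  simpa [ContinuousAt] using squeeze_zero_norm hbound hlim

theorem tendsto_norm_sq_sub_div_cocompact (hC : ∀ x, ‖f x‖ ≤ C) (α : ℝ) :
    Tendsto (fun β => ‖f α - f β‖ ^ 2 / (α - β)) (cocompact ℝ) (𝓝 0) := by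
  have hlim : Tendsto (fun β => (2 * C) ^ 2 / dist β α) (cocompact ℝ) (𝓝 0) :=
    tendsto_const_nhds.div_atTop (tendsto_dist_right_cocompact_atTop α)
  refine squeeze_zero_norm' ?_ hlim
  filter_upwards with β
  rw [norm_div, norm_pow, norm_norm, Real.norm_eq_abs, Real.dist_eq, abs_sub_comm]
  gcongr
  exact (norm_sub_le _ _).trans (by linarith [hC α, hC β])

theorem integral_norm_sq_sub_div_sq_eq (hf : Differentiable ℝ f) (hK : LipschitzWith K f)
    (hC : ∀ x, ‖f x‖ ≤ C) (hf' : Integrable (deriv f)) (α : ℝ) :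
    ∫ β, ‖f α - f β‖ ^ 2 / (α - β) ^ 2 = 2 * (∫ β,
      (starRingEnd ℂ (f α) - starRingEnd ℂ (f β)) / ((α - β : ℝ) : ℂ) * deriv f β).re := by
  have hG := integrable_norm_sq_sub_div_sq hK hC α
  have hF := (integrable_conj_sub_div_mul_deriv hK hf' α).re.const_mul 2
  have hlim := tendsto_norm_sq_sub_div_cocompact hC α
  have h := integral_of_hasDerivAt_of_ne_of_tendsto (continuousAt_norm_sq_sub_div hK α)
    (fun β hβ => hasDerivAt_norm_sq_sub_div (hf β) hβ) (hG.sub hF)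
    (hlim.mono_left atBot_le_cocompact) (hlim.mono_left atTop_le_cocompact)
  have hre := integral_re (integrable_conj_sub_div_mul_deriv hK hf' α)
  simp only [RCLike.re_to_complex] at hF hre
  rw [integral_sub hG hF, integral_const_mul, hre] at h
  linarith

end Lipschitz

theorem SchwartzMap.exists_lipschitzWith {F : Type*} [NormedAddCommGroup F] [NormedSpace ℝ F]
    (w : 𝓢(ℝ, F)) : ∃ K, LipschitzWith K w := by
  refine ⟨(SchwartzMap.seminorm ℝ 0 0 (derivCLM ℝ F w)).toNNReal,
    lipschitzWith_of_nnnorm_deriv_le w.differentiable fun x => ?_⟩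
  rw [← SchwartzMap.derivCLM_apply ℝ, ← NNReal.coe_le_coe, coe_nnnorm]
  exact (norm_le_seminorm ℝ _ x).trans (Real.le_coe_toNNReal _)

/-- For a Schwartz function `w`, both integrals converge absolutely and
`(2/π)·Re ∫ ((conj w(α) − conj w(β))/(α − β))·w'(β) dβ
  = (1/π) ∫ |w(α) − w(β)|²/(α − β)² dβ`, which in particular is nonnegative. -/
theorem statement1 (w : SchwartzMap ℝ ℂ) (α : ℝ) :
    Integrable (fun β : ℝ =>
      ((starRingEnd ℂ) (w α) - (starRingEnd ℂ) (w β)) / ((α - β : ℝ) : ℂ)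
        * deriv (⇑w) β) ∧
    Integrable (fun β : ℝ => ‖w α - w β‖ ^ 2 / (α - β) ^ 2) ∧
    ((2 / Real.pi) * (∫ β : ℝ,
        ((starRingEnd ℂ) (w α) - (starRingEnd ℂ) (w β)) / ((α - β : ℝ) : ℂ)
          * deriv (⇑w) β).re
      = (1 / Real.pi) * ∫ β : ℝ, ‖w α - w β‖ ^ 2 / (α - β) ^ 2) ∧
    0 ≤ (2 / Real.pi) * (∫ β : ℝ,
        ((starRingEnd ℂ) (w α) - (starRingEnd ℂ) (w β)) / ((α - β : ℝ) : ℂ)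
          * deriv (⇑w) β).re := by
  obtain ⟨K, hK⟩ := w.exists_lipschitzWith
  have hC : ∀ x, ‖w x‖ ≤ SchwartzMap.seminorm ℝ 0 0 w := norm_le_seminorm ℝ w
  have hw' : Integrable (deriv w) := (derivCLM ℝ ℂ w).integrable
  have heq : (2 / Real.pi) * (∫ β : ℝ,
      ((starRingEnd ℂ) (w α) - (starRingEnd ℂ) (w β)) / ((α - β : ℝ) : ℂ) * deriv (⇑w) β).re
      = (1 / Real.pi) * ∫ β : ℝ, ‖w α - w β‖ ^ 2 / (α - β) ^ 2 := by
    rw [integral_norm_sq_sub_div_sq_eq w.differentiable hK hC hw' α]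
    ring
  refine ⟨integrable_conj_sub_div_mul_deriv hK hw' α, integrable_norm_sq_sub_div_sq hK hC α, heq,
    heq ▸ mul_nonneg (by positivity) (integral_nonneg fun β => by positivity)⟩
end

section
/- Let w : ℝ → ℂ be twice continuously differentiable, bounded, and such that w' is a Schwartz function. Then for every α ∈ ℝ, |w(α)·w'(α)|² ≤ 2·‖w'‖_{L²(ℝ)}·‖w·(w·w')'‖_{L²(ℝ)}. In particular, sup_{α∈ℝ} |w(α)w'(α)|² ≤ 2‖w'‖_{L²}‖w·(ww')'‖_{L²}. -/
/-!
Put `F = w w'`. Since `w` is bounded and `w'` decays, `F → 0` at `-∞`, so by the fundamental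
theorem of calculus `|F(α)|² = ∫_{-∞}^α (|F|²)' ≤ 2 ∫ |F| |F'|`. Now `|F| |F'| = |w'| |w F'|`,
and Cauchy–Schwarz bounds the last integral by `‖w'‖₂ ‖w F'‖₂`.
-/

open MeasureTheory Filter Topology Set
open scoped ENNReal

theorem lintegral_enorm_mul_le_eLpNorm_mul_eLpNorm {α E F : Type*} [MeasurableSpace α]
    {μ : Measure α} [NormedAddCommGroup E] [NormedAddCommGroup F] {f : α → E} {g : α → F}
    (hf : AEStronglyMeasurable f μ) (hg : AEStronglyMeasurable g μ) (p q : ℝ≥0∞)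
    [p.HolderConjugate q] :
    ∫⁻ x, ‖f x‖ₑ * ‖g x‖ₑ ∂μ ≤ eLpNorm f p μ * eLpNorm g q μ := by
  simpa [eLpNorm_one_eq_lintegral_enorm, enorm_mul] using
    eLpNorm_le_eLpNorm_mul_eLpNorm'_of_norm hf hg (fun x y => ‖x‖ * ‖y‖) 1
      (.of_forall fun x => by simp) (p := p) (q := q) (r := 1)

theorem enorm_le_lintegral_enorm_deriv_of_tendsto_atBot {E : Type*} [NormedAddCommGroup E]
    [NormedSpace ℝ E] [CompleteSpace E] {f : ℝ → E} (hf : Differentiable ℝ f)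
    (hlim : Tendsto f atBot (𝓝 0)) (a : ℝ) : ‖f a‖ₑ ≤ ∫⁻ x, ‖deriv f x‖ₑ := by
  by_cases hfin : ∫⁻ x, ‖deriv f x‖ₑ = ∞
  · simp [hfin]
  have hint : Integrable (deriv f) := ⟨aestronglyMeasurable_deriv f _, Ne.lt_top hfin⟩
  have hftc : ∫ x in Iic a, deriv f x = f a := by
    simpa using integral_Iic_of_hasDerivAt_of_tendsto' (fun x _ => (hf x).hasDerivAt)
      hint.integrableOn hlim
  calc ‖f a‖ₑ = ‖∫ x in Iic a, deriv f x‖ₑ := by rw [hftc]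
    _ ≤ ∫⁻ x in Iic a, ‖deriv f x‖ₑ := enorm_integral_le_lintegral_enorm _
    _ ≤ ∫⁻ x, ‖deriv f x‖ₑ := setLIntegral_le_lintegral _ _

theorem enorm_sq_le_two_mul_lintegral_enorm_mul_enorm_deriv {E : Type*}
    [NormedAddCommGroup E] [InnerProductSpace ℝ E] {f : ℝ → E}
    (hf : Differentiable ℝ f) (hlim : Tendsto f atBot (𝓝 0)) (a : ℝ) :
    ‖f a‖ₑ ^ 2 ≤ 2 * ∫⁻ x, ‖f x‖ₑ * ‖deriv f x‖ₑ := by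
  have hderiv : ∀ x, HasDerivAt (‖f ·‖ ^ 2) (2 * inner ℝ (f x) (deriv f x)) x :=
    fun x => (hf x).hasDerivAt.norm_sq
  have hbound : ∀ x, ‖deriv (‖f ·‖ ^ 2) x‖ₑ ≤ 2 * (‖f x‖ₑ * ‖deriv f x‖ₑ) := by
    intro x
    rw [(hderiv x).deriv, enorm_mul]
    gcongr
    · exact_mod_cast (Real.enorm_natCast 2).le
    · simpa [enorm_eq_nnnorm, ← ENNReal.coe_mul] using nnnorm_inner_le_nnnorm (f x) (deriv f x)
  calc ‖f a‖ₑ ^ 2 = ‖‖f a‖ ^ 2‖ₑ := by rw [enorm_pow, enorm_norm]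
    _ ≤ ∫⁻ x, ‖deriv (‖f ·‖ ^ 2) x‖ₑ :=
      enorm_le_lintegral_enorm_deriv_of_tendsto_atBot (fun x => (hderiv x).differentiableAt)
        (by simpa using hlim.norm.pow 2) a
    _ ≤ ∫⁻ x, 2 * (‖f x‖ₑ * ‖deriv f x‖ₑ) := lintegral_mono hbound
    _ = 2 * ∫⁻ x, ‖f x‖ₑ * ‖deriv f x‖ₑ := lintegral_const_mul' _ _ (by norm_num)

theorem SchwartzMap.tendsto_atBot_zero {E : Type*} [NormedAddCommGroup E] [NormedSpace ℝ E]
    (g : SchwartzMap ℝ E) : Tendsto g atBot (𝓝 0) :=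
  g.toZeroAtInfty.zero_at_infty'.mono_left atBot_le_cocompact

/-- For `w : ℝ → ℂ` twice continuously differentiable, bounded, with `w'`
a Schwartz function, one has the pointwise bound
`|w(α)w'(α)|² ≤ 2‖w'‖_{L²}‖w·(ww')'‖_{L²}` and the corresponding supremum bound. -/
theorem statement2 (w : ℝ → ℂ) (hw : ContDiff ℝ 2 w)
    (hbdd : ∃ C : ℝ, ∀ α : ℝ, ‖w α‖ ≤ C)
    (hw' : ∃ g : SchwartzMap ℝ ℂ, ⇑g = deriv w) :
    (∀ α : ℝ, (‖w α * deriv w α‖₊ : ℝ≥0∞) ^ 2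
        ≤ 2 * eLpNorm (deriv w) 2 volume *
            eLpNorm (fun x : ℝ => w x * deriv (fun y : ℝ => w y * deriv w y) x) 2 volume) ∧
    (⨆ α : ℝ, (‖w α * deriv w α‖₊ : ℝ≥0∞) ^ 2)
        ≤ 2 * eLpNorm (deriv w) 2 volume *
            eLpNorm (fun x : ℝ => w x * deriv (fun y : ℝ => w y * deriv w y) x) 2 volume := by
  obtain ⟨C, hC⟩ := hbdd
  obtain ⟨g, hg⟩ := hw'
  rw [← hg]
  set F : ℝ → ℂ := fun y => w y * g y
  have hF : Differentiable ℝ F := (hw.differentiable two_ne_zero).mul g.differentiable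
  have hFlim : Tendsto F atBot (𝓝 0) :=
    isBoundedUnder_le_mul_tendsto_zero (isBoundedUnder_of ⟨C, hC⟩) g.tendsto_atBot_zero
  have pointwise : ∀ α, (‖w α * g α‖₊ : ℝ≥0∞) ^ 2
      ≤ 2 * eLpNorm g 2 volume * eLpNorm (fun x => w x * deriv F x) 2 volume := fun α =>
    calc (‖w α * g α‖₊ : ℝ≥0∞) ^ 2 = ‖F α‖ₑ ^ 2 := rfl
      _ ≤ 2 * ∫⁻ x, ‖F x‖ₑ * ‖deriv F x‖ₑ :=
        enorm_sq_le_two_mul_lintegral_enorm_mul_enorm_deriv hF hFlim α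
      _ = 2 * ∫⁻ x, ‖g x‖ₑ * ‖w x * deriv F x‖ₑ := by
        congr 1
        exact lintegral_congr fun x => by simp only [F, enorm_mul]; ring
      _ ≤ 2 * eLpNorm g 2 volume * eLpNorm (fun x => w x * deriv F x) 2 volume := by
        rw [mul_assoc]
        gcongr
        exact lintegral_enorm_mul_le_eLpNorm_mul_eLpNorm g.continuous.aestronglyMeasurable
          (hw.continuous.aestronglyMeasurable.mul (aestronglyMeasurable_deriv F _)) 2 2
  exact ⟨pointwise, iSup_le pointwise⟩
end

section
/- There exists a universal constant C > 0 such that for every complex-valued Schwartz function f ∈ 𝒮(ℝ), ∫_ℝ ( sup_{β ≠ α} |f(α) − f(β)|/|α − β| )² dα ≤ C·‖f'‖_{L²(ℝ)}², where for each α the supremum is taken over all β ∈ ℝ with β ≠ α. -/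
/-!
Writing `f α - f β` as the integral of `f'` between `β` and `α` bounds the integrand by the square
of the maximal function `M` of `|f'|` over intervals having `α` as an endpoint. The Vitali covering
lemma makes `M` of weak type (1,1). Splitting `|f'|` at height `c / 2` gives
`c · |{M > c}| ≤ 8 ∫_{2|f'| > c} |f'|`, and integrating this against `2c dc` (layer cake and
Tonelli) gives `∫ M² ≤ 32 ∫ |f'|²`.
-/

open MeasureTheory Set Function
open scoped ENNReal

lemma setOf_ofReal_lt_inter_Ioi {a : ℝ≥0∞} (ha : a ≠ ∞) :
    {t : ℝ | ENNReal.ofReal t < a} ∩ Ioi 0 = Ioo 0 a.toReal := by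
  ext t
  simp only [mem_inter_iff, mem_ofPred_eq, mem_Ioi, mem_Ioo]
  exact ⟨fun ⟨hlt, ht⟩ => ⟨ht, (ENNReal.ofReal_lt_iff_lt_toReal ht.le ha).1 hlt⟩,
    fun ⟨ht, hlt⟩ => ⟨(ENNReal.ofReal_lt_iff_lt_toReal ht.le ha).2 hlt, ht⟩⟩

lemma volume_setOf_ofReal_lt_inter_Ioi (a : ℝ≥0∞) :
    volume ({t : ℝ | ENNReal.ofReal t < a} ∩ Ioi 0) = a := by
  rcases eq_or_ne a ∞ with rfl | ha
  · simp
  · rw [setOf_ofReal_lt_inter_Ioi ha, Real.volume_Ioo, sub_zero, ENNReal.ofReal_toReal ha]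

lemma setLIntegral_setOf_ofReal_lt_inter_Ioi (a : ℝ≥0∞) :
    ∫⁻ t in {t : ℝ | ENNReal.ofReal t < a} ∩ Ioi 0, 2 * ENNReal.ofReal t = a ^ 2 := by
  rcases eq_or_ne a ∞ with rfl | ha
  · simp only [ENNReal.ofReal_lt_top, ofPred_true, univ_inter, ne_eq, OfNat.ofNat_ne_zero,
      not_false_eq_true, ENNReal.top_pow]
    refine eq_top_iff.2 ?_
    calc ∞ = ∫⁻ _ in Ioi (1 : ℝ), 1 := by simp
      _ ≤ ∫⁻ t in Ioi 1, 2 * ENNReal.ofReal t := by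
          refine setLIntegral_mono (by fun_prop) fun t ht => ?_
          calc (1 : ℝ≥0∞) ≤ ENNReal.ofReal t := ENNReal.one_le_ofReal.2 (le_of_lt ht)
            _ ≤ 2 * ENNReal.ofReal t := le_mul_of_one_le_left' one_le_two
      _ ≤ ∫⁻ t in Ioi 0, 2 * ENNReal.ofReal t := lintegral_mono_set (Ioi_subset_Ioi zero_le_one)
  · have hA : 0 ≤ a.toReal := ENNReal.toReal_nonneg
    have hint : IntegrableOn (fun t : ℝ => 2 * t) (Ioc 0 a.toReal) :=
      (continuous_const.mul continuous_id).integrableOn_Icc.mono_set Ioc_subset_Icc_self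
    calc ∫⁻ t in {t : ℝ | ENNReal.ofReal t < a} ∩ Ioi 0, 2 * ENNReal.ofReal t
        = ∫⁻ t in Ioc 0 a.toReal, ENNReal.ofReal (2 * t) := by
          rw [setOf_ofReal_lt_inter_Ioi ha, restrict_Ioo_eq_restrict_Ioc]
          simp [ENNReal.ofReal_mul]
      _ = ENNReal.ofReal (∫ t in 0..a.toReal, 2 * t) := by
          rw [intervalIntegral.integral_of_le hA, ofReal_integral_eq_lintegral_ofReal hint
            (ae_restrict_of_forall_mem measurableSet_Ioc fun t ht => by
              simp only [Pi.zero_apply]; linarith [ht.1])]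
      _ = a ^ 2 := by
          rw [intervalIntegral.integral_const_mul, integral_id, ← ENNReal.ofReal_toReal ha,
            ← ENNReal.ofReal_pow hA, ENNReal.toReal_ofReal hA]
          ring_nf

section LayerCake

variable {α : Type*} [MeasurableSpace α] {μ : Measure α} [SFinite μ] {h : α → ℝ≥0∞}

theorem lintegral_Ioi_setLIntegral_lt_comm (hh : Measurable h) {K : α → ℝ → ℝ≥0∞}
    (hK : Measurable (uncurry K)) :
    ∫⁻ t in Ioi 0, ∫⁻ x in {x | ENNReal.ofReal t < h x}, K x t ∂μ =
      ∫⁻ x, (∫⁻ t in {t : ℝ | ENNReal.ofReal t < h x} ∩ Ioi 0, K x t) ∂μ := by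
  set S := {p : α × ℝ | ENNReal.ofReal p.2 < h p.1}
  have hS : MeasurableSet S := measurableSet_lt (by fun_prop) (hh.comp measurable_fst)
  have hx (t : ℝ) : ∫⁻ x in {x | ENNReal.ofReal t < h x}, K x t ∂μ =
      ∫⁻ x, S.indicator (uncurry K) (x, t) ∂μ := by
    rw [← lintegral_indicator (measurableSet_lt measurable_const hh)]
    rfl
  have ht (x : α) : ∫⁻ t in {t : ℝ | ENNReal.ofReal t < h x} ∩ Ioi 0, K x t =
      ∫⁻ t in Ioi 0, S.indicator (uncurry K) (x, t) := by
    rw [← Measure.restrict_restrict (measurableSet_lt (by fun_prop) measurable_const),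
      ← lintegral_indicator (measurableSet_lt (by fun_prop) measurable_const)]
    rfl
  simp_rw [hx, ht]
  exact (lintegral_lintegral_swap (f := fun x t => S.indicator (uncurry K) (x, t))
    (hK.indicator hS).aemeasurable).symm

theorem lintegral_sq_eq_lintegral_Ioi_mul_meas_lt (hh : Measurable h) :
    ∫⁻ x, h x ^ 2 ∂μ =
      ∫⁻ t in Ioi 0, 2 * ENNReal.ofReal t * μ {x | ENNReal.ofReal t < h x} := by
  simpa only [setLIntegral_const, setLIntegral_setOf_ofReal_lt_inter_Ioi] using
    (lintegral_Ioi_setLIntegral_lt_comm (μ := μ) hh (K := fun _ t => 2 * ENNReal.ofReal t)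
      (by fun_prop)).symm

theorem lintegral_Ioi_setLIntegral_lt_eq (hh : Measurable h) {F : α → ℝ≥0∞}
    (hF : Measurable F) :
    ∫⁻ t in Ioi 0, ∫⁻ x in {x | ENNReal.ofReal t < h x}, F x ∂μ = ∫⁻ x, F x * h x ∂μ := by
  simpa only [setLIntegral_const, volume_setOf_ofReal_lt_inter_Ioi] using
    lintegral_Ioi_setLIntegral_lt_comm (μ := μ) hh (K := fun x _ => F x) (hF.comp measurable_fst)

end LayerCake

/-- The Hardy–Littlewood maximal function of `g` over intervals with an endpoint at `x`. -/
noncomputable def endpointMaximal (g : ℝ → ℝ≥0∞) (x : ℝ) : ℝ≥0∞ :=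
  ⨆ (y : ℝ) (_ : y ≠ x), (∫⁻ t in uIcc x y, g t) / volume (uIcc x y)

section EndpointMaximal

variable {g : ℝ → ℝ≥0∞}

lemma volume_uIcc_ne_zero {x y : ℝ} (h : y ≠ x) : volume (uIcc x y) ≠ 0 := by
  simpa [Real.volume_interval, sub_eq_zero] using h

lemma le_endpointMaximal (g : ℝ → ℝ≥0∞) {x y : ℝ} (hy : y ≠ x) :
    (∫⁻ t in uIcc x y, g t) / volume (uIcc x y) ≤ endpointMaximal g x :=
  le_iSup₂ (f := fun y (_ : y ≠ x) => (∫⁻ t in uIcc x y, g t) / volume (uIcc x y)) y hy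

lemma exists_lt_of_lt_endpointMaximal {c : ℝ≥0∞} {x : ℝ} (h : c < endpointMaximal g x) :
    ∃ y ≠ x, c * volume (uIcc x y) < ∫⁻ t in uIcc x y, g t := by
  simp only [endpointMaximal, lt_iSup_iff] at h
  obtain ⟨y, hy, hc⟩ := h
  exact ⟨y, hy, (ENNReal.lt_div_iff_mul_lt (.inl (volume_uIcc_ne_zero hy))
    (.inl isCompact_uIcc.measure_lt_top.ne)).1 hc⟩

lemma endpointMaximal_add_le {g₁ : ℝ → ℝ≥0∞} (hg₁ : Measurable g₁) (g₂ : ℝ → ℝ≥0∞) (x : ℝ) :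
    endpointMaximal (g₁ + g₂) x ≤ endpointMaximal g₁ x + endpointMaximal g₂ x := by
  refine iSup₂_le fun y hy => ?_
  rw [Pi.add_def, lintegral_add_left hg₁, ENNReal.add_div]
  exact add_le_add (le_endpointMaximal g₁ hy) (le_endpointMaximal g₂ hy)

lemma endpointMaximal_le_of_le {c : ℝ≥0∞} (h : ∀ t, g t ≤ c) (x : ℝ) :
    endpointMaximal g x ≤ c :=
  iSup₂_le fun _ _ => ENNReal.div_le_of_le_mul <|
    (lintegral_mono fun t => h t).trans_eq (setLIntegral_const _ c)

end EndpointMaximal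

lemma uIcc_eq_closedBall (x y : ℝ) :
    uIcc x y = Metric.closedBall ((x + y) / 2) (|x - y| / 2) := by
  rw [uIcc, Real.Icc_eq_closedBall, min_add_max, max_sub_min_eq_abs, abs_sub_comm]

lemma exists_countable_pairwiseDisjoint_uIcc_volume_le {E : Set ℝ} {y : ℝ → ℝ} {R : ℝ}
    (hy : ∀ x ∈ E, y x ≠ x) (hR : ∀ x ∈ E, |x - y x| ≤ R) :
    ∃ u ⊆ E, u.Countable ∧ u.PairwiseDisjoint (fun b => uIcc b (y b)) ∧
      volume E ≤ 4 * ∑' b : u, volume (uIcc (b : ℝ) (y b)) := by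
  obtain ⟨u, huE, hdisj, hcov⟩ :=
    Vitali.exists_disjoint_subfamily_covering_enlargement_closedBall E (fun x => (x + y x) / 2)
      (fun x => |x - y x| / 2) (R / 2) (fun x hx => by linarith [hR x hx]) 4 (by norm_num)
  simp only [← uIcc_eq_closedBall] at hdisj
  have hu : u.Countable := hdisj.countable_of_nonempty_interior fun b hb => by
    rw [uIcc, interior_Icc, nonempty_Ioo, min_lt_max]
    exact (hy b (huE hb)).symm
  refine ⟨u, huE, hu, hdisj, ?_⟩
  have := hu.to_subtype
  calc volume E
      ≤ volume (⋃ b : u, Metric.closedBall (((b : ℝ) + y b) / 2) (4 * (|(b : ℝ) - y b| / 2))) :=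
        measure_mono fun x hx => by
          obtain ⟨b, hb, hsub⟩ := hcov x hx
          exact mem_iUnion.2 ⟨⟨b, hb⟩, hsub (uIcc_eq_closedBall x (y x) ▸ left_mem_uIcc)⟩
    _ ≤ ∑' b : u, volume (Metric.closedBall (((b : ℝ) + y b) / 2) (4 * (|(b : ℝ) - y b| / 2))) :=
        measure_iUnion_le _
    _ = 4 * ∑' b : u, volume (uIcc (b : ℝ) (y b)) := by
        rw [← ENNReal.tsum_mul_left]
        congr 1 with b
        rw [Real.volume_closedBall, Real.volume_interval, abs_sub_comm, ← ENNReal.ofReal_ofNat,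
          ← ENNReal.ofReal_mul (by norm_num)]
        ring_nf

theorem mul_volume_lt_endpointMaximal_le (g : ℝ → ℝ≥0∞) (c : ℝ≥0∞) :
    c * volume {x | c < endpointMaximal g x} ≤ 4 * ∫⁻ t, g t := by
  rcases eq_or_ne (∫⁻ t, g t) ∞ with hg | hg
  · simp [hg]
  rcases eq_or_ne c 0 with rfl | hc
  · simp
  set E := {x | c < endpointMaximal g x}
  choose! y hyx hy using fun x (hx : x ∈ E) => exists_lt_of_lt_endpointMaximal hx
  have hR : ∀ x ∈ E, |x - y x| ≤ ((∫⁻ t, g t) / c).toReal := fun x hx => by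
    rw [← ENNReal.ofReal_le_iff_le_toReal (ENNReal.div_ne_top hg hc), abs_sub_comm,
      ← Real.volume_interval, ENNReal.le_div_iff_mul_le (.inl hc) (.inr hg), mul_comm]
    exact (hy x hx).le.trans (setLIntegral_le_lintegral _ _)
  obtain ⟨u, huE, hu, hdisj, hE⟩ := exists_countable_pairwiseDisjoint_uIcc_volume_le hyx hR
  have := hu.to_subtype
  calc c * volume E
      ≤ 4 * ∑' b : u, c * volume (uIcc (b : ℝ) (y b)) := by
        rw [ENNReal.tsum_mul_left, mul_left_comm]
        gcongr
    _ ≤ 4 * ∑' b : u, ∫⁻ t in uIcc (b : ℝ) (y b), g t := by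
        gcongr with b
        exact (hy b (huE b.2)).le
    _ = 4 * ∫⁻ t in ⋃ b : u, uIcc (b : ℝ) (y b), g t := by
        rw [lintegral_iUnion (fun _ => measurableSet_uIcc) hdisj.subtype]
    _ ≤ 4 * ∫⁻ t, g t := by
        gcongr
        exact Measure.restrict_le_self

theorem mul_volume_lt_endpointMaximal_le_setLIntegral {g : ℝ → ℝ≥0∞} (hg : Measurable g)
    (c : ℝ≥0∞) :
    c * volume {x | c < endpointMaximal g x} ≤ 8 * ∫⁻ x in {x | c < 2 * g x}, g x := by
  set s := {x | c < 2 * g x}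
  have hs : MeasurableSet s := measurableSet_lt measurable_const (hg.const_mul 2)
  have hsplit : ∀ x, endpointMaximal g x ≤ endpointMaximal (s.indicator g) x + c / 2 := fun x =>
    calc endpointMaximal g x = endpointMaximal (s.indicator g + sᶜ.indicator g) x := by
          rw [indicator_self_add_compl]
      _ ≤ endpointMaximal (s.indicator g) x + endpointMaximal (sᶜ.indicator g) x :=
          endpointMaximal_add_le (hg.indicator hs) _ x
      _ ≤ endpointMaximal (s.indicator g) x + c / 2 := by
          refine add_le_add_right (endpointMaximal_le_of_le (fun t => ?_) x) _
          refine indicator_apply_le' (fun ht => ?_) fun _ => zero_le ..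
          rw [ENNReal.le_div_iff_mul_le (.inl two_ne_zero) (.inl ENNReal.ofNat_ne_top), mul_comm]
          exact not_lt.1 ht
  have hsub : {x | c < endpointMaximal g x} ⊆ {x | c / 2 < endpointMaximal (s.indicator g) x} :=
    fun x hx => lt_of_not_ge fun hle =>
      (hx.trans_le ((hsplit x).trans (add_le_add_left hle _))).ne' (ENNReal.add_halves c) |>.elim
  calc c * volume {x | c < endpointMaximal g x}
      = 2 * (c / 2 * volume {x | c < endpointMaximal g x}) := by
        rw [← mul_assoc, ENNReal.mul_div_cancel two_ne_zero ENNReal.ofNat_ne_top]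
    _ ≤ 2 * (c / 2 * volume {x | c / 2 < endpointMaximal (s.indicator g) x}) := by
        gcongr
    _ ≤ 2 * (4 * ∫⁻ x, s.indicator g x) := by
        gcongr 2 * ?_
        exact mul_volume_lt_endpointMaximal_le _ _
    _ = 8 * ∫⁻ x in s, g x := by
        rw [lintegral_indicator hs, ← mul_assoc]
        norm_num

theorem lintegral_endpointMaximal_sq_le {g : ℝ → ℝ≥0∞} (hg : Measurable g)
    (hMg : Measurable (endpointMaximal g)) :
    ∫⁻ x, endpointMaximal g x ^ 2 ≤ 32 * ∫⁻ x, g x ^ 2 := by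
  calc ∫⁻ x, endpointMaximal g x ^ 2
      = ∫⁻ t in Ioi 0,
          2 * ENNReal.ofReal t * volume {x | ENNReal.ofReal t < endpointMaximal g x} :=
        lintegral_sq_eq_lintegral_Ioi_mul_meas_lt hMg
    _ ≤ ∫⁻ t in Ioi 0, 2 * (8 * ∫⁻ x in {x | ENNReal.ofReal t < 2 * g x}, g x) := by
        refine lintegral_mono fun t => ?_
        rw [mul_assoc]
        exact mul_le_mul_right (mul_volume_lt_endpointMaximal_le_setLIntegral hg _) 2
    _ = 16 * ∫⁻ t in Ioi 0, ∫⁻ x in {x | ENNReal.ofReal t < 2 * g x}, g x := by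
        rw [← lintegral_const_mul' _ _ (by norm_num)]
        simp only [← mul_assoc]
        norm_num
    _ = 32 * ∫⁻ x, g x ^ 2 := by
        rw [lintegral_Ioi_setLIntegral_lt_eq (hg.const_mul 2) hg,
          ← lintegral_const_mul' _ _ (by norm_num), ← lintegral_const_mul' _ _ (by norm_num)]
        congr 1 with x
        ring

section NormedSpace

variable {E : Type*} [NormedAddCommGroup E]

lemma lintegral_uIcc_enorm_eq {u : ℝ → E} (hu : LocallyIntegrable u) (x y : ℝ) :
    ∫⁻ t in uIcc x y, ‖u t‖ₑ = ENNReal.ofReal |∫ t in x..y, ‖u t‖| := by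
  have hint : IntegrableOn u (uIoc x y) :=
    (hu.integrableOn_isCompact isCompact_uIcc).mono_set uIoc_subset_uIcc
  rw [intervalIntegral.abs_integral_eq_abs_integral_uIoc,
    abs_of_nonneg (integral_nonneg fun _ => norm_nonneg _),
    ofReal_integral_norm_eq_lintegral_enorm hint, uIcc, ← restrict_Ioc_eq_restrict_Icc]
  rfl

lemma continuous_lintegral_uIcc_enorm {u : ℝ → E} (hu : LocallyIntegrable u) (y : ℝ) :
    Continuous fun x => ∫⁻ t in uIcc x y, ‖u t‖ₑ := by
  simp_rw [uIcc_comm _ y, lintegral_uIcc_enorm_eq hu y]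
  refine ENNReal.continuous_ofReal.comp
    (intervalIntegral.continuous_primitive (fun a b => ?_) y).abs
  exact IntegrableOn.intervalIntegrable (hu.integrableOn_isCompact isCompact_uIcc).norm

theorem lowerSemicontinuous_endpointMaximal {u : ℝ → E} (hu : LocallyIntegrable u) :
    LowerSemicontinuous (endpointMaximal fun t => ‖u t‖ₑ) := by
  intro x₀ v hv
  obtain ⟨y, hy, hv⟩ : ∃ y ≠ x₀, v < (∫⁻ t in uIcc x₀ y, ‖u t‖ₑ) / volume (uIcc x₀ y) := by
    simpa only [endpointMaximal, lt_iSup_iff, exists_prop] using hv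
  have hQ : ContinuousAt (fun x => (∫⁻ t in uIcc x y, ‖u t‖ₑ) / volume (uIcc x y)) x₀ := by
    simp_rw [Real.volume_interval]
    have hD : Continuous fun x => ENNReal.ofReal |y - x| :=
      ENNReal.continuous_ofReal.comp (continuous_const.sub continuous_id).abs
    refine ENNReal.Tendsto.div (continuous_lintegral_uIcc_enorm hu y).continuousAt (.inr ?_)
      hD.continuousAt (.inl ENNReal.ofReal_ne_top)
    rw [← Real.volume_interval]
    exact volume_uIcc_ne_zero hy
  filter_upwards [hQ.eventually_const_lt hv, eventually_ne_nhds hy.symm] with x hvx hxy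
  exact hvx.trans_le (le_endpointMaximal _ hxy.symm)

lemma enorm_sub_le_lintegral_uIcc_deriv [NormedSpace ℝ E] {f : ℝ → E} (hf : ContDiff ℝ 1 f)
    (a b : ℝ) :
    ‖f a - f b‖ₑ ≤ ∫⁻ t in uIcc a b, ‖deriv f t‖ₑ := by
  rcases le_total a b with hab | hab
  · rw [enorm_sub_rev, uIcc_of_le hab]
    exact enorm_sub_le_lintegral_deriv_of_contDiffOn_Icc hf.contDiffOn hab
  · rw [uIcc_of_ge hab]
    exact enorm_sub_le_lintegral_deriv_of_contDiffOn_Icc hf.contDiffOn hab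

lemma ofReal_norm_sub_div_le_endpointMaximal [NormedSpace ℝ E] {f : ℝ → E}
    (hf : ContDiff ℝ 1 f) {α β : ℝ} (h : β ≠ α) :
    ENNReal.ofReal (‖f α - f β‖ / |α - β|) ≤ endpointMaximal (fun t => ‖deriv f t‖ₑ) α := by
  rw [ENNReal.ofReal_div_of_pos (abs_pos.2 (sub_ne_zero.2 h.symm)), ofReal_norm, abs_sub_comm,
    ← Real.volume_interval]
  exact (ENNReal.div_le_div_right (enorm_sub_le_lintegral_uIcc_deriv hf α β) _).trans
    (le_endpointMaximal _ h)

end NormedSpace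

/-- there is a universal `C > 0` with
`∫ (sup_{β ≠ α} |f(α) − f(β)|/|α − β|)² dα ≤ C‖f'‖_{L²}²` for every Schwartz `f`. -/
theorem statement4 : ∃ C : ℝ, 0 < C ∧ ∀ f : SchwartzMap ℝ ℂ,
    (∫⁻ α : ℝ, (⨆ (β : ℝ) (_ : β ≠ α),
        ENNReal.ofReal (‖f α - f β‖ / |α - β|)) ^ 2)
      ≤ ENNReal.ofReal C * eLpNorm (deriv (⇑f)) 2 volume ^ 2 := by
  refine ⟨32, by norm_num, fun f => ?_⟩
  have hf : ContDiff ℝ 1 f := f.smooth 1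
  have hf' : Continuous (deriv f) := hf.continuous_deriv le_rfl
  calc (∫⁻ α : ℝ, (⨆ (β : ℝ) (_ : β ≠ α), ENNReal.ofReal (‖f α - f β‖ / |α - β|)) ^ 2)
      ≤ ∫⁻ α, endpointMaximal (fun t => ‖deriv f t‖ₑ) α ^ 2 := by
        gcongr with α
        exact iSup₂_le fun β hβ => ofReal_norm_sub_div_le_endpointMaximal hf hβ
    _ ≤ 32 * ∫⁻ t, ‖deriv f t‖ₑ ^ 2 :=
        lintegral_endpointMaximal_sq_le hf'.enorm.measurable
          (lowerSemicontinuous_endpointMaximal hf'.locallyIntegrable).measurable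
    _ = ENNReal.ofReal 32 * eLpNorm (deriv f) 2 volume ^ 2 := by
        have := eLpNorm_nnreal_pow_eq_lintegral (f := deriv f) (μ := volume) (p := 2) two_ne_zero
        norm_num at this
        rw [this, ENNReal.ofReal_ofNat]
end

section
/- There exists a universal constant C > 0 such that for all complex-valued Schwartz functions f, g ∈ 𝒮(ℝ), the function T(α) := (1/π) ∫_ℝ ((f(α) − f(β))/(α − β))·g(β) dβ (the integral converging absolutely for each α) satisfies ‖T‖_{L²(ℝ)} ≤ C·‖f'‖_{L²(ℝ)}·‖g‖_{L¹(ℝ)}. -/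
/-!
Write `K(α, β) = (f α - f β) / (α - β) = ∫₀¹ f'(β + t (α - β)) dt`. Both estimates are instances
of the Schur-type bound `∫ (∫ H(x, y) w(y) dy)² dx ≤ (sup_y ∫ H(x, y)² dx) (∫ w)²`, which is
Cauchy–Schwarz against the weight `w` followed by Tonelli. With `H(α, t) = √t |f'(β + t (α - β))|`
and `w(t) = t^(-1/2)` on `(0, 1]`, the substitution `α ↦ β + t (α - β)` makes `∫ H(α, t)² dα`
equal to `‖f'‖₂²`, which gives Hardy's inequality `‖K(·, β)‖₂ ≤ 2 ‖f'‖₂`. With `H = |K|` and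
`w = |g|` it then gives `‖T‖₂ ≤ (2 / π) ‖f'‖₂ ‖g‖₁`. The integrals defining `T` converge
absolutely because `f` is Lipschitz, so `K` is bounded.
-/

open MeasureTheory
open scoped ENNReal NNReal

section CauchySchwarz

variable {α β : Type*} [MeasurableSpace α] [MeasurableSpace β]

theorem ENNReal.rpow_one_half_sq (x : ℝ≥0∞) : (x ^ (1 / 2 : ℝ)) ^ 2 = x := by
  rw [← ENNReal.rpow_natCast, ← ENNReal.rpow_mul]
  norm_num

theorem lintegral_mul_sq_le {ν : Measure β} {h w : β → ℝ≥0∞} (hh : AEMeasurable h ν)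
    (hw : AEMeasurable w ν) :
    (∫⁻ y, h y * w y ∂ν) ^ 2 ≤ (∫⁻ y, w y ∂ν) * ∫⁻ y, h y ^ 2 * w y ∂ν := by
  have holder := ENNReal.lintegral_mul_norm_pow_le hw ((hh.pow_const 2).mul hw)
    (p := 1 / 2) (q := 1 / 2) (by norm_num) (by norm_num) (by norm_num)
  have integrand (y : β) : w y ^ (1 / 2 : ℝ) * (h y ^ 2 * w y) ^ (1 / 2 : ℝ) = h y * w y := by
    rw [ENNReal.mul_rpow_of_nonneg _ _ (by norm_num), ← ENNReal.rpow_natCast,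
      ← ENNReal.rpow_mul]
    calc _ = h y * (w y ^ (1 / 2 : ℝ)) ^ 2 := by norm_num; ring
      _ = h y * w y := by rw [ENNReal.rpow_one_half_sq]
  simp only [Pi.mul_apply, integrand] at holder
  calc (∫⁻ y, h y * w y ∂ν) ^ 2
      ≤ ((∫⁻ y, w y ∂ν) ^ (1 / 2 : ℝ) * (∫⁻ y, h y ^ 2 * w y ∂ν) ^ (1 / 2 : ℝ)) ^ 2 := by
        gcongr
    _ = (∫⁻ y, w y ∂ν) * ∫⁻ y, h y ^ 2 * w y ∂ν := by
        rw [mul_pow, ENNReal.rpow_one_half_sq, ENNReal.rpow_one_half_sq]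

theorem lintegral_sq_lintegral_mul_le {μ : Measure α} {ν : Measure β} [SFinite μ] [SFinite ν]
    {H : α → β → ℝ≥0∞} (hH : Measurable (Function.uncurry H)) {w : β → ℝ≥0∞}
    (hw : Measurable w) {A : ℝ≥0∞} (hA : ∀ᵐ y ∂ν, ∫⁻ x, H x y ^ 2 ∂μ ≤ A) :
    ∫⁻ x, (∫⁻ y, H x y * w y ∂ν) ^ 2 ∂μ ≤ A * (∫⁻ y, w y ∂ν) ^ 2 := by
  have hH2w : Measurable fun p : α × β => H p.1 p.2 ^ 2 * w p.2 :=
    (hH.pow_const 2).mul (hw.comp measurable_snd)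
  calc ∫⁻ x, (∫⁻ y, H x y * w y ∂ν) ^ 2 ∂μ
      ≤ ∫⁻ x, (∫⁻ y, w y ∂ν) * ∫⁻ y, H x y ^ 2 * w y ∂ν ∂μ :=
        lintegral_mono fun x =>
          lintegral_mul_sq_le (hH.comp measurable_prodMk_left).aemeasurable hw.aemeasurable
    _ = (∫⁻ y, w y ∂ν) * ∫⁻ y, (∫⁻ x, H x y ^ 2 ∂μ) * w y ∂ν := by
        rw [lintegral_const_mul _ hH2w.lintegral_prod_right',
          lintegral_lintegral_swap hH2w.aemeasurable]
        congr 1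
        refine lintegral_congr fun y => lintegral_mul_const (w y) ?_
        exact (hH.comp measurable_prodMk_right).pow_const 2
    _ ≤ (∫⁻ y, w y ∂ν) * ∫⁻ y, A * w y ∂ν :=
        mul_le_mul_right (lintegral_mono_ae (hA.mono fun y hy => mul_le_mul_left hy _)) _
    _ = A * (∫⁻ y, w y ∂ν) ^ 2 := by
        rw [lintegral_const_mul _ hw]
        ring

end CauchySchwarz

theorem lintegral_comp_mul_add {F : ℝ → ℝ≥0∞} (hF : Measurable F) {a : ℝ} (ha : a ≠ 0) (c : ℝ) :
    ∫⁻ x, F (a * x + c) = ENNReal.ofReal |a⁻¹| * ∫⁻ x, F x := by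
  have hmap : Measure.map (fun x : ℝ => a * x + c) volume = ENNReal.ofReal |a⁻¹| • volume := by
    change Measure.map ((· + c) ∘ (a * ·)) volume = _
    rw [← Measure.map_map (measurable_add_const c) (measurable_const_mul a),
      Real.map_volume_mul_left ha, Measure.map_smul, map_add_right_eq_self]
  rw [← lintegral_map hF (by fun_prop), hmap, lintegral_smul_measure, smul_eq_mul]

theorem lintegral_Ioc_rpow_neg_one_half :
    ∫⁻ t in Set.Ioc (0 : ℝ) 1, ENNReal.ofReal (t ^ (-(1 / 2) : ℝ)) = 2 := by
  have hint : IntervalIntegrable (fun t : ℝ => t ^ (-(1 / 2) : ℝ)) volume 0 1 :=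
    intervalIntegral.intervalIntegrable_rpow' (by norm_num)
  rw [intervalIntegrable_iff_integrableOn_Ioc_of_le zero_le_one] at hint
  rw [← ofReal_integral_eq_lintegral_ofReal hint
    ((ae_restrict_mem measurableSet_Ioc).mono fun t ht => Real.rpow_nonneg ht.1.le _),
    ← intervalIntegral.integral_of_le zero_le_one, integral_rpow (Or.inl (by norm_num))]
  norm_num

section DifferenceQuotient

variable {f : ℝ → ℂ}

theorem sub_div_eq_intervalIntegral_deriv (hf : Differentiable ℝ f) (hf' : Continuous (deriv f))
    {a b : ℝ} (hab : a ≠ b) :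
    (f a - f b) / ((a - b : ℝ) : ℂ) = ∫ t in (0 : ℝ)..1, deriv f (b + t * (a - b)) := by
  have hsub : a - b ≠ 0 := sub_ne_zero.mpr hab
  have hcomp := intervalIntegral.integral_comp_mul_add (a := 0) (b := 1) (deriv f) hsub b
  simp only [mul_zero, zero_add, mul_one, sub_add_cancel] at hcomp
  rw [intervalIntegral.integral_deriv_eq_sub (fun x _ => hf x) (hf'.intervalIntegrable _ _),
    Complex.real_smul, Complex.ofReal_inv] at hcomp
  simp only [add_comm b, mul_comm _ (a - b), hcomp, div_eq_inv_mul]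

theorem enorm_sub_div_le_lintegral_deriv (hf : Differentiable ℝ f) (hf' : Continuous (deriv f))
    {a b : ℝ} (hab : a ≠ b) :
    ‖(f a - f b) / ((a - b : ℝ) : ℂ)‖ₑ ≤
      ∫⁻ t in Set.Ioc (0 : ℝ) 1, ‖deriv f (b + t * (a - b))‖ₑ := by
  rw [sub_div_eq_intervalIntegral_deriv hf hf' hab, intervalIntegral.integral_of_le zero_le_one]
  exact enorm_integral_le_lintegral_enorm _

theorem integrable_sub_div_mul {L : ℝ≥0} (hf : LipschitzWith L f) {g : ℝ → ℂ} (hg : Integrable g)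
    (a : ℝ) : Integrable fun b => (f a - f b) / ((a - b : ℝ) : ℂ) * g b := by
  have hquot : Measurable fun b => (f a - f b) / ((a - b : ℝ) : ℂ) := by
    have := hf.continuous.measurable
    fun_prop
  have hmeas := hquot.aestronglyMeasurable.mul hg.aestronglyMeasurable
  refine (hg.norm.const_mul L).mono' hmeas (ae_of_all _ fun b => ?_)
  rw [norm_mul, norm_div, Complex.norm_real, Real.norm_eq_abs]
  gcongr
  exact div_le_of_le_mul₀ (abs_nonneg _) L.coe_nonneg (hf.norm_sub_le a b)

theorem lintegral_enorm_sub_div_sq_le (hf : Differentiable ℝ f) (hf' : Continuous (deriv f))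
    (b : ℝ) :
    ∫⁻ a, ‖(f a - f b) / ((a - b : ℝ) : ℂ)‖ₑ ^ 2 ≤ 4 * ∫⁻ x, ‖deriv f x‖ₑ ^ 2 := by
  set H : ℝ → ℝ → ℝ≥0∞ := fun a t => ENNReal.ofReal √t * ‖deriv f (b + t * (a - b))‖ₑ
  set w : ℝ → ℝ≥0∞ := fun t => ENNReal.ofReal (t ^ (-(1 / 2) : ℝ))
  have hH : Measurable (Function.uncurry H) := by
    have := hf'.measurable
    fun_prop
  have hw : Measurable w := by fun_prop
  have quotient_le : ∀ᵐ a, ‖(f a - f b) / ((a - b : ℝ) : ℂ)‖ₑ ^ 2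
      ≤ (∫⁻ t in Set.Ioc (0 : ℝ) 1, H a t * w t) ^ 2 := by
    filter_upwards [measure_singleton b |> compl_mem_ae_iff.mpr] with a (ha : a ≠ b)
    gcongr
    refine (enorm_sub_div_le_lintegral_deriv hf hf' ha).trans_eq
      (setLIntegral_congr_fun measurableSet_Ioc fun t ht => ?_)
    rw [mul_right_comm, ← ENNReal.ofReal_mul (Real.sqrt_nonneg t), Real.sqrt_eq_rpow,
      ← Real.rpow_add ht.1]
    norm_num
  have rescaled : ∀ᵐ t ∂volume.restrict (Set.Ioc (0 : ℝ) 1),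
      ∫⁻ a, H a t ^ 2 ≤ ∫⁻ x, ‖deriv f x‖ₑ ^ 2 := by
    filter_upwards [ae_restrict_mem measurableSet_Ioc] with t ht
    have harg (a : ℝ) : b + t * (a - b) = t * a + (b - t * b) := by ring
    simp only [H, mul_pow, ← ENNReal.ofReal_pow (Real.sqrt_nonneg t), Real.sq_sqrt ht.1.le, harg]
    rw [lintegral_const_mul' _ _ ENNReal.ofReal_ne_top,
      lintegral_comp_mul_add (hf'.measurable.enorm.pow_const 2) ht.1.ne', ← mul_assoc,
      abs_of_pos (inv_pos.mpr ht.1), ← ENNReal.ofReal_mul ht.1.le, mul_inv_cancel₀ ht.1.ne',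
      ENNReal.ofReal_one, one_mul]
  calc ∫⁻ a, ‖(f a - f b) / ((a - b : ℝ) : ℂ)‖ₑ ^ 2
      ≤ ∫⁻ a, (∫⁻ t in Set.Ioc (0 : ℝ) 1, H a t * w t) ^ 2 := lintegral_mono_ae quotient_le
    _ ≤ (∫⁻ x, ‖deriv f x‖ₑ ^ 2) * (∫⁻ t in Set.Ioc (0 : ℝ) 1, w t) ^ 2 :=
        lintegral_sq_lintegral_mul_le hH hw rescaled
    _ = 4 * ∫⁻ x, ‖deriv f x‖ₑ ^ 2 := by
        rw [lintegral_Ioc_rpow_neg_one_half, mul_comm]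
        norm_num

end DifferenceQuotient

theorem sq_eLpNorm_two_eq_lintegral {α E : Type*} [MeasurableSpace α] [NormedAddCommGroup E]
    {μ : Measure α} (f : α → E) : eLpNorm f 2 μ ^ 2 = ∫⁻ x, ‖f x‖ₑ ^ 2 ∂μ := by
  simpa using eLpNorm_nnreal_pow_eq_lintegral (f := f) (μ := μ) (p := 2) two_ne_zero

theorem SchwartzMap.lipschitzWith (f : SchwartzMap ℝ ℂ) :
    LipschitzWith ‖(SchwartzMap.derivCLM ℝ ℂ f).toBoundedContinuousFunction‖₊ f :=
  lipschitzWith_of_nnnorm_deriv_le f.differentiable fun x => by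
    simpa only [SchwartzMap.toBoundedContinuousFunction_apply, SchwartzMap.derivCLM_apply] using
      (SchwartzMap.derivCLM ℝ ℂ f).toBoundedContinuousFunction.nnnorm_coe_le_nnnorm x

/-- commutator estimate: there is a universal `C > 0` so that for Schwartz
`f, g`, the function `T(α) = (1/π) ∫ ((f(α) − f(β))/(α − β)) g(β) dβ` (absolutely
convergent) satisfies `‖T‖_{L²} ≤ C‖f'‖_{L²}‖g‖_{L¹}`. -/
theorem statement6 : ∃ C : ℝ, 0 < C ∧ ∀ f g : SchwartzMap ℝ ℂ,
    (∀ α : ℝ, Integrable (fun β : ℝ => (f α - f β) / ((α - β : ℝ) : ℂ) * g β)) ∧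
    eLpNorm (fun α : ℝ => ((1 / Real.pi : ℝ) : ℂ) *
        ∫ β : ℝ, (f α - f β) / ((α - β : ℝ) : ℂ) * g β) 2 volume
      ≤ ENNReal.ofReal C * eLpNorm (deriv (⇑f)) 2 volume * eLpNorm (⇑g) 1 volume := by
  refine ⟨2 / Real.pi, by positivity, fun f g =>
    ⟨integrable_sub_div_mul f.lipschitzWith g.integrable, ?_⟩⟩
  set c := ENNReal.ofReal (1 / Real.pi)
  set K : ℝ → ℝ → ℝ≥0∞ := fun α β => ‖(f α - f β) / ((α - β : ℝ) : ℂ)‖ₑ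
  have hK : Measurable (Function.uncurry K) := by
    have := f.continuous.measurable
    fun_prop
  have pointwise (α : ℝ) : ‖((1 / Real.pi : ℝ) : ℂ) *
      ∫ β : ℝ, (f α - f β) / ((α - β : ℝ) : ℂ) * g β‖ₑ ≤ c * ∫⁻ β, K α β * ‖g β‖ₑ := by
    rw [← Complex.real_smul, enorm_smul, Real.enorm_of_nonneg (by positivity)]
    gcongr
    simpa only [enorm_mul] using
      enorm_integral_le_lintegral_enorm fun β => (f α - f β) / ((α - β : ℝ) : ℂ) * g β
  have hardy : ∀ β, ∫⁻ α, K α β ^ 2 ≤ 4 * ∫⁻ x, ‖deriv f x‖ₑ ^ 2 :=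
    lintegral_enorm_sub_div_sq_le f.differentiable (f.smooth 1).continuous_deriv_one
  rw [← ENNReal.pow_le_pow_left_iff two_ne_zero, sq_eLpNorm_two_eq_lintegral]
  calc ∫⁻ α, ‖((1 / Real.pi : ℝ) : ℂ) * ∫ β : ℝ, (f α - f β) / ((α - β : ℝ) : ℂ) * g β‖ₑ ^ 2
      ≤ ∫⁻ α, c ^ 2 * (∫⁻ β, K α β * ‖g β‖ₑ) ^ 2 :=
        lintegral_mono fun α => (pow_le_pow_left' (pointwise α) 2).trans_eq (mul_pow _ _ _)
    _ = c ^ 2 * ∫⁻ α, (∫⁻ β, K α β * ‖g β‖ₑ) ^ 2 :=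
        lintegral_const_mul' _ _ (ENNReal.pow_ne_top ENNReal.ofReal_ne_top)
    _ ≤ c ^ 2 * ((4 * ∫⁻ x, ‖deriv f x‖ₑ ^ 2) * (∫⁻ β, ‖g β‖ₑ) ^ 2) :=
        mul_le_mul_right (lintegral_sq_lintegral_mul_le hK g.continuous.measurable.enorm
          (ae_of_all _ hardy)) _
    _ = (ENNReal.ofReal (2 / Real.pi) * eLpNorm (deriv f) 2 volume * eLpNorm g 1 volume) ^ 2 := by
        rw [mul_pow, mul_pow, sq_eLpNorm_two_eq_lintegral, eLpNorm_one_eq_lintegral_enorm,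
          div_eq_mul_one_div 2, ENNReal.ofReal_mul zero_le_two, ENNReal.ofReal_ofNat]
        ring
end

section
/- There exists a universal constant C > 0 such that for all complex-valued Schwartz functions f, g ∈ 𝒮(ℝ), ‖fg‖_{Ḣ^{1/2}} ≤ C·( ‖f'‖_{L²(ℝ)}·‖g‖_{L²(ℝ)} + ‖f‖_{L^∞(ℝ)}·‖g‖_{Ḣ^{1/2}} ). -/
open MeasureTheory Complex
open scoped ENNReal NNReal

/-- The homogeneous `Ḣ^{1/2}` seminorm,
`‖u‖_{Ḣ^{1/2}}² = (1/(2π)) ∫∫ |u(α) − u(β)|²/(α − β)² dβ dα`, valued in `[0,∞]`. -/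
noncomputable def Hhalf {E : Type*} [NormedAddCommGroup E] (u : ℝ → E) : ℝ≥0∞ :=
  (ENNReal.ofReal (1 / (2 * Real.pi)) *
    ∫⁻ α : ℝ, ∫⁻ β : ℝ, ENNReal.ofReal (‖u α - u β‖ ^ 2 / (α - β) ^ 2)) ^ (1/2 : ℝ)

/-!
Write `fg(α) − fg(β) = f(β) (g(α) − g(β)) + (f(α) − f(β)) g(α)`. The first term contributes at
most `2 ‖f‖²_∞ ‖g‖²_{Ḣ^{1/2}}`. For the second, a Hardy-type inequality gives, uniformly in `α`,
`∫ |f(α) − f(β)|² / (α − β)² dβ ≤ 4 ‖f'‖²_{L²}`: write `f(α + h) − f(α) = h ∫₀¹ f'(α + th) dt`,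
apply Cauchy–Schwarz on `[0, 1]` with the weight `t^{1/2}`, integrate in `h` using
`∫ |f'(α + th)|² dh = ‖f'‖²_{L²} / t`, and finish with `∫₀¹ t^{-1/2} dt = 2`.
Integrating `|g(α)|²` against this bound gives `8 ‖f'‖²_{L²} ‖g‖²_{L²}`; as `1/(2π) ≤ 1`,
the constant `C = 4` works.
-/

open Set

theorem lintegral_comp_mul_right {F : ℝ → ℝ≥0∞} (hF : Measurable F) {c : ℝ} (hc : c ≠ 0) :
    ∫⁻ x, F (x * c) = ENNReal.ofReal |c⁻¹| * ∫⁻ y, F y := by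
  rw [← lintegral_map hF (measurable_mul_const c), Real.map_volume_mul_right hc,
    lintegral_smul_measure, smul_eq_mul]

theorem setLIntegral_Ioc_zero_one_ofReal_rpow {r : ℝ} (hr : -1 < r) :
    ∫⁻ t in Ioc (0:ℝ) 1, ENNReal.ofReal (t ^ r) = ENNReal.ofReal (1 / (r + 1)) := by
  have hint : IntegrableOn (fun t : ℝ => t ^ r) (Ioc 0 1) := by
    rw [← intervalIntegrable_iff_integrableOn_Ioc_of_le zero_le_one]
    exact intervalIntegral.intervalIntegrable_rpow' hr
  rw [← ofReal_integral_eq_lintegral_ofReal hint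
    ((ae_restrict_iff' measurableSet_Ioc).2 (ae_of_all _ fun t ht => Real.rpow_nonneg ht.1.le _)),
    ← intervalIntegral.integral_of_le zero_le_one, integral_rpow (Or.inl hr),
    Real.one_rpow, Real.zero_rpow (by linarith), sub_zero]

theorem sq_lintegral_le_lintegral_inv_mul_lintegral_mul_sq {X : Type*} [MeasurableSpace X]
    {μ : Measure X} {w e : X → ℝ≥0∞} (hw : AEMeasurable w μ) (he : AEMeasurable e μ)
    (hw0 : ∀ᵐ x ∂μ, w x ≠ 0) (hwtop : ∀ᵐ x ∂μ, w x ≠ ⊤) :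
    (∫⁻ x, e x ∂μ) ^ 2 ≤ (∫⁻ x, (w x)⁻¹ ∂μ) * ∫⁻ x, w x * e x ^ 2 ∂μ := by
  set a : X → ℝ≥0∞ := fun x => (w x)⁻¹ ^ (2⁻¹ : ℝ)
  set b : X → ℝ≥0∞ := fun x => w x ^ (2⁻¹ : ℝ) * e x
  have hab : ∫⁻ x, e x ∂μ = ∫⁻ x, (a * b) x ∂μ := by
    refine lintegral_congr_ae ?_
    filter_upwards [hw0, hwtop] with x h0 htop
    simp only [a, b, Pi.mul_apply, ← mul_assoc,
      ← ENNReal.mul_rpow_of_nonneg _ _ (by norm_num : (0:ℝ) ≤ 2⁻¹),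
      ENNReal.inv_mul_cancel h0 htop, ENNReal.one_rpow, one_mul]
  have ha : ∀ x, a x ^ (2:ℝ) = (w x)⁻¹ := fun x => ENNReal.rpow_inv_rpow two_ne_zero _
  have hb : ∀ x, b x ^ (2:ℝ) = w x * e x ^ 2 := fun x => by
    rw [ENNReal.mul_rpow_of_nonneg _ _ zero_le_two, ENNReal.rpow_inv_rpow two_ne_zero,
      ENNReal.rpow_two]
  have holder := ENNReal.lintegral_mul_le_Lp_mul_Lq μ Real.HolderConjugate.two_two
    (f := a) (g := b) (hw.inv.pow_const _) ((hw.pow_const _).mul he)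
  simp only [ha, hb] at holder
  calc (∫⁻ x, e x ∂μ) ^ 2
      ≤ ((∫⁻ x, (w x)⁻¹ ∂μ) ^ (1 / 2 : ℝ) * (∫⁻ x, w x * e x ^ 2 ∂μ) ^ (1 / 2 : ℝ)) ^ 2 := by
        rw [hab]; gcongr
    _ = _ := by
        rw [mul_pow, ← ENNReal.rpow_natCast, ← ENNReal.rpow_natCast, ← ENNReal.rpow_mul,
          ← ENNReal.rpow_mul]
        norm_num

theorem sq_setLIntegral_Ioc_zero_one_le {e : ℝ → ℝ≥0∞} (he : AEMeasurable e) :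
    (∫⁻ t in Ioc (0:ℝ) 1, e t) ^ 2
      ≤ 2 * ∫⁻ t in Ioc (0:ℝ) 1, ENNReal.ofReal (t ^ (2⁻¹ : ℝ)) * e t ^ 2 := by
  have hinv : ∫⁻ t in Ioc (0:ℝ) 1, (ENNReal.ofReal (t ^ (2⁻¹ : ℝ)))⁻¹ = 2 := by
    have h := setLIntegral_Ioc_zero_one_ofReal_rpow (r := -2⁻¹) (by norm_num)
    norm_num at h
    rw [← h]
    refine setLIntegral_congr_fun measurableSet_Ioc fun t ht => ?_
    rw [← ENNReal.ofReal_inv_of_pos (by have := ht.1; positivity), Real.rpow_neg ht.1.le,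
      one_div]
  have hpos : ∀ᵐ t ∂(volume.restrict (Ioc (0:ℝ) 1)), 0 < t :=
    (ae_restrict_iff' measurableSet_Ioc).2 (ae_of_all _ fun t ht => ht.1)
  rw [← hinv]
  exact sq_lintegral_le_lintegral_inv_mul_lintegral_mul_sq (by fun_prop) he.restrict
    (hpos.mono fun t ht => by simpa using Real.rpow_pos_of_pos ht _)
    (ae_of_all _ fun _ => ENNReal.ofReal_ne_top)

theorem eLpNorm_two_sq {X E : Type*} [MeasurableSpace X] [NormedAddCommGroup E] (u : X → E)
    (μ : Measure X) : eLpNorm u 2 μ ^ 2 = ∫⁻ x, ‖u x‖ₑ ^ 2 ∂μ := by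
  simpa using eLpNorm_nnreal_pow_eq_lintegral (f := u) (μ := μ) (p := 2) two_ne_zero

section DifferenceQuotient

variable {E : Type*} [NormedAddCommGroup E] [NormedSpace ℝ E] {f : ℝ → E}

theorem enorm_sub_le_enorm_mul_lintegral_deriv (hf : ContDiff ℝ 1 f) (α h : ℝ) :
    ‖f (α + h) - f α‖ₑ ≤ ‖h‖ₑ * ∫⁻ t in Ioc 0 1, ‖deriv f (α + h * t)‖ₑ := by
  have hφ : ContDiff ℝ 1 fun t : ℝ => f (α + h * t) := hf.comp (by fun_prop)
  have hderiv : ∀ t, deriv (fun t : ℝ => f (α + h * t)) t = h • deriv f (α + h * t) :=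
    fun t => by rw [deriv_comp_mul_left h (fun s => f (α + s)) t, deriv_comp_const_add]
  calc ‖f (α + h) - f α‖ₑ = ‖f (α + h * 1) - f (α + h * 0)‖ₑ := by simp
    _ ≤ ∫⁻ t in Icc 0 1, ‖deriv (fun t : ℝ => f (α + h * t)) t‖ₑ :=
        enorm_sub_le_lintegral_deriv_of_contDiffOn_Icc hφ.contDiffOn zero_le_one
    _ = ‖h‖ₑ * ∫⁻ t in Ioc 0 1, ‖deriv f (α + h * t)‖ₑ := by
        simp_rw [hderiv, enorm_smul, restrict_Ioc_eq_restrict_Icc]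
        exact lintegral_const_mul' _ _ enorm_ne_top

theorem ofReal_norm_sub_sq_div_sq_le (hf : ContDiff ℝ 1 f) (α h : ℝ) :
    ENNReal.ofReal (‖f (α + h) - f α‖ ^ 2 / h ^ 2)
      ≤ (∫⁻ t in Ioc 0 1, ‖deriv f (α + h * t)‖ₑ) ^ 2 := by
  rcases eq_or_ne h 0 with rfl | hh
  · simp
  have hscale : ‖f (α + h) - f α‖ ^ 2 / h ^ 2 = ‖h⁻¹ • (f (α + h) - f α)‖ ^ 2 := by
    rw [norm_smul, mul_pow, norm_inv, Real.norm_eq_abs, inv_pow, sq_abs, inv_mul_eq_div]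
  rw [hscale, ENNReal.ofReal_pow (norm_nonneg _), ofReal_norm, enorm_smul, enorm_inv hh]
  gcongr
  rw [ENNReal.inv_mul_le_iff (by simpa using hh) enorm_ne_top]
  exact enorm_sub_le_enorm_mul_lintegral_deriv hf α h

theorem lintegral_ofReal_norm_sub_sq_div_sq_le (hf : ContDiff ℝ 1 f) (α : ℝ) :
    ∫⁻ β, ENNReal.ofReal (‖f α - f β‖ ^ 2 / (α - β) ^ 2) ≤ 4 * ∫⁻ y, ‖deriv f y‖ₑ ^ 2 := by
  have hD : Continuous fun y => ‖deriv f y‖ₑ := (hf.continuous_deriv le_rfl).enorm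
  have hw : Continuous fun t : ℝ => ENNReal.ofReal (t ^ (2⁻¹ : ℝ)) :=
    ENNReal.continuous_ofReal.comp (Real.continuous_rpow_const (by norm_num))
  have hscale : ∀ t ∈ Ioc (0:ℝ) 1,
      ∫⁻ h, ENNReal.ofReal (t ^ (2⁻¹ : ℝ)) * ‖deriv f (α + h * t)‖ₑ ^ 2
        = ENNReal.ofReal (t ^ (-2⁻¹ : ℝ)) * ∫⁻ y, ‖deriv f y‖ₑ ^ 2 := fun t ht => by
    rw [lintegral_const_mul _ (Continuous.measurable (by fun_prop)),
      lintegral_comp_mul_right (F := fun s => ‖deriv f (α + s)‖ₑ ^ 2)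
        (Continuous.measurable (by fun_prop)) ht.1.ne',
      lintegral_add_left_eq_self (fun y => ‖deriv f y‖ₑ ^ 2), ← mul_assoc,
      ← ENNReal.ofReal_mul (Real.rpow_nonneg ht.1.le _), abs_of_pos (inv_pos.2 ht.1),
      ← Real.rpow_neg_one t, ← Real.rpow_add ht.1]
    norm_num
  calc ∫⁻ β, ENNReal.ofReal (‖f α - f β‖ ^ 2 / (α - β) ^ 2)
      = ∫⁻ h, ENNReal.ofReal (‖f (α + h) - f α‖ ^ 2 / h ^ 2) := by
        rw [← lintegral_add_left_eq_self _ α]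
        simp [norm_sub_rev]
    _ ≤ ∫⁻ h, 2 * ∫⁻ t in Ioc 0 1, ENNReal.ofReal (t ^ (2⁻¹ : ℝ)) * ‖deriv f (α + h * t)‖ₑ ^ 2 :=
        lintegral_mono fun h => (ofReal_norm_sub_sq_div_sq_le hf α h).trans
          (sq_setLIntegral_Ioc_zero_one_le (Continuous.aemeasurable (by fun_prop)))
    _ = 2 * ∫⁻ t in Ioc 0 1, ∫⁻ h,
          ENNReal.ofReal (t ^ (2⁻¹ : ℝ)) * ‖deriv f (α + h * t)‖ₑ ^ 2 := by
        rw [lintegral_const_mul' _ _ (by norm_num), lintegral_lintegral_swap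
          ((hw.measurable.comp measurable_snd).mul
            (Continuous.measurable (by fun_prop))).aemeasurable]
    _ = 2 * ∫⁻ t in Ioc 0 1, ENNReal.ofReal (t ^ (-2⁻¹ : ℝ)) * ∫⁻ y, ‖deriv f y‖ₑ ^ 2 := by
        rw [setLIntegral_congr_fun measurableSet_Ioc hscale]
    _ = 4 * ∫⁻ y, ‖deriv f y‖ₑ ^ 2 := by
        rw [lintegral_mul_const _ (by fun_prop),
          setLIntegral_Ioc_zero_one_ofReal_rpow (by norm_num), ← mul_assoc]
        norm_num

end DifferenceQuotient

section Product

variable {R : Type*} [SeminormedRing R]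

theorem norm_mul_sub_mul_sq_le (a b c d : R) :
    ‖a * c - b * d‖ ^ 2 ≤ 2 * ‖b‖ ^ 2 * ‖c - d‖ ^ 2 + 2 * ‖c‖ ^ 2 * ‖a - b‖ ^ 2 := by
  have h : ‖a * c - b * d‖ ≤ ‖b‖ * ‖c - d‖ + ‖a - b‖ * ‖c‖ :=
    calc ‖a * c - b * d‖ = ‖b * (c - d) + (a - b) * c‖ := by noncomm_ring
      _ ≤ ‖b‖ * ‖c - d‖ + ‖a - b‖ * ‖c‖ :=
        (norm_add_le _ _).trans (add_le_add (norm_mul_le _ _) (norm_mul_le _ _))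
  nlinarith [sq_nonneg (‖b‖ * ‖c - d‖ - ‖a - b‖ * ‖c‖), norm_nonneg (a * c - b * d),
    mul_nonneg (norm_nonneg b) (norm_nonneg (c - d)),
    mul_nonneg (norm_nonneg (a - b)) (norm_nonneg c)]

theorem ofReal_norm_mul_sub_mul_sq_div_le (a b c d : R) {r : ℝ} (hr : 0 ≤ r) :
    ENNReal.ofReal (‖a * c - b * d‖ ^ 2 / r)
      ≤ 2 * ‖b‖ₑ ^ 2 * ENNReal.ofReal (‖c - d‖ ^ 2 / r)
        + 2 * ‖c‖ₑ ^ 2 * ENNReal.ofReal (‖a - b‖ ^ 2 / r) := by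
  have h : ‖a * c - b * d‖ ^ 2 / r
      ≤ 2 * ‖b‖ ^ 2 * (‖c - d‖ ^ 2 / r) + 2 * ‖c‖ ^ 2 * (‖a - b‖ ^ 2 / r) := by
    simpa only [add_div, mul_div_assoc] using
      div_le_div_of_nonneg_right (norm_mul_sub_mul_sq_le a b c d) hr
  refine (ENNReal.ofReal_le_ofReal h).trans_eq ?_
  rw [ENNReal.ofReal_add (by positivity) (by positivity),
    ENNReal.ofReal_mul (by positivity : (0:ℝ) ≤ 2 * ‖b‖ ^ 2),
    ENNReal.ofReal_mul (by positivity : (0:ℝ) ≤ 2 * ‖c‖ ^ 2), ENNReal.ofReal_mul zero_le_two,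
    ENNReal.ofReal_mul zero_le_two, ENNReal.ofReal_pow (norm_nonneg _),
    ENNReal.ofReal_pow (norm_nonneg _), ofReal_norm, ofReal_norm, ENNReal.ofReal_ofNat]

end Product

noncomputable def gagliardoEnergy {E : Type*} [NormedAddCommGroup E] (u : ℝ → E) : ℝ≥0∞ :=
  ∫⁻ α, ∫⁻ β, ENNReal.ofReal (‖u α - u β‖ ^ 2 / (α - β) ^ 2)

theorem Hhalf_sq {E : Type*} [NormedAddCommGroup E] (u : ℝ → E) :
    Hhalf u ^ 2 = ENNReal.ofReal (1 / (2 * Real.pi)) * gagliardoEnergy u := by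
  rw [Hhalf, one_div 2, ← ENNReal.rpow_natCast, Nat.cast_ofNat,
    ENNReal.rpow_inv_rpow two_ne_zero, gagliardoEnergy]

theorem Hhalf_le_iff {E : Type*} [NormedAddCommGroup E] {u : ℝ → E} {C : ℝ≥0∞} :
    Hhalf u ≤ C ↔ ENNReal.ofReal (1 / (2 * Real.pi)) * gagliardoEnergy u ≤ C ^ 2 := by
  rw [← Hhalf_sq, ENNReal.pow_le_pow_left_iff two_ne_zero]

section GagliardoProduct

variable {A : Type*} [NormedRing A] [NormedSpace ℝ A] {f g : ℝ → A}

theorem lintegral_ofReal_norm_mul_sub_mul_sq_div_sq_le (hf : ContDiff ℝ 1 f)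
    (hg : Continuous g) (α : ℝ) :
    ∫⁻ β, ENNReal.ofReal (‖f α * g α - f β * g β‖ ^ 2 / (α - β) ^ 2)
      ≤ 2 * eLpNorm f ⊤ volume ^ 2 * (∫⁻ β, ENNReal.ofReal (‖g α - g β‖ ^ 2 / (α - β) ^ 2))
        + 8 * eLpNorm (deriv f) 2 volume ^ 2 * ‖g α‖ₑ ^ 2 := by
  have hmeas : Measurable fun β => ENNReal.ofReal (‖g α - g β‖ ^ 2 / (α - β) ^ 2) := by
    fun_prop
  have hfe : Continuous fun β => ‖f β‖ₑ := hf.continuous.enorm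
  have hfbound : ∀ᵐ β, ‖f β‖ₑ ≤ eLpNorm f ⊤ volume := by
    simpa only [eLpNorm_exponent_top] using ae_le_eLpNormEssSup
  calc ∫⁻ β, ENNReal.ofReal (‖f α * g α - f β * g β‖ ^ 2 / (α - β) ^ 2)
      ≤ ∫⁻ β, (2 * ‖f β‖ₑ ^ 2 * ENNReal.ofReal (‖g α - g β‖ ^ 2 / (α - β) ^ 2)
          + 2 * ‖g α‖ₑ ^ 2 * ENNReal.ofReal (‖f α - f β‖ ^ 2 / (α - β) ^ 2)) :=
        lintegral_mono fun β => ofReal_norm_mul_sub_mul_sq_div_le _ _ _ _ (sq_nonneg _)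
    _ = (∫⁻ β, 2 * ‖f β‖ₑ ^ 2 * ENNReal.ofReal (‖g α - g β‖ ^ 2 / (α - β) ^ 2))
          + 2 * ‖g α‖ₑ ^ 2 * ∫⁻ β, ENNReal.ofReal (‖f α - f β‖ ^ 2 / (α - β) ^ 2) := by
        rw [lintegral_add_left
            (f := fun β => 2 * ‖f β‖ₑ ^ 2 * ENNReal.ofReal (‖g α - g β‖ ^ 2 / (α - β) ^ 2))
            (((hfe.measurable.pow_const 2).const_mul 2).mul hmeas),
          lintegral_const_mul' _ _ (by finiteness)]
    _ ≤ (∫⁻ β, 2 * eLpNorm f ⊤ volume ^ 2 * ENNReal.ofReal (‖g α - g β‖ ^ 2 / (α - β) ^ 2))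
          + 2 * ‖g α‖ₑ ^ 2 * (4 * ∫⁻ y, ‖deriv f y‖ₑ ^ 2) := by
        gcongr ?_ + 2 * ‖g α‖ₑ ^ 2 * ?_
        · exact lintegral_mono_ae (hfbound.mono fun β hβ => by gcongr)
        · exact lintegral_ofReal_norm_sub_sq_div_sq_le hf α
    _ = _ := by
        rw [lintegral_const_mul _ hmeas, eLpNorm_two_sq]
        ring

theorem gagliardoEnergy_mul_le (hf : ContDiff ℝ 1 f) (hg : Continuous g) :
    gagliardoEnergy (fun α => f α * g α)
      ≤ 2 * eLpNorm f ⊤ volume ^ 2 * gagliardoEnergy g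
        + 8 * eLpNorm (deriv f) 2 volume ^ 2 * eLpNorm g 2 volume ^ 2 := by
  have hmeas : Measurable fun α => ∫⁻ β, ENNReal.ofReal (‖g α - g β‖ ^ 2 / (α - β) ^ 2) :=
    Measurable.lintegral_prod_right' (f := fun p : ℝ × ℝ =>
      ENNReal.ofReal (‖g p.1 - g p.2‖ ^ 2 / (p.1 - p.2) ^ 2)) (by fun_prop)
  calc gagliardoEnergy (fun α => f α * g α)
      ≤ ∫⁻ α, (2 * eLpNorm f ⊤ volume ^ 2
            * (∫⁻ β, ENNReal.ofReal (‖g α - g β‖ ^ 2 / (α - β) ^ 2))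
          + 8 * eLpNorm (deriv f) 2 volume ^ 2 * ‖g α‖ₑ ^ 2) :=
        lintegral_mono fun α => lintegral_ofReal_norm_mul_sub_mul_sq_div_sq_le hf hg α
    _ = _ := by
        rw [lintegral_add_left (hmeas.const_mul _), lintegral_const_mul _ hmeas,
          lintegral_const_mul _ (hg.enorm.measurable.pow_const 2), eLpNorm_two_sq g,
          gagliardoEnergy]

end GagliardoProduct

theorem two_mul_sq_add_eight_mul_sq_le (x y : ℝ≥0∞) :
    2 * x ^ 2 + 8 * y ^ 2 ≤ (4 * (y + x)) ^ 2 := by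
  have hx : x ^ 2 ≤ (y + x) ^ 2 := by gcongr; exact le_add_self
  have hy : y ^ 2 ≤ (y + x) ^ 2 := by gcongr; exact le_self_add
  calc 2 * x ^ 2 + 8 * y ^ 2 ≤ 2 * (y + x) ^ 2 + 8 * (y + x) ^ 2 := by gcongr
    _ ≤ (4 * (y + x)) ^ 2 := by
      rw [← add_mul, mul_pow]
      gcongr
      norm_num

/-- there is a universal `C > 0` so that for Schwartz `f, g`,
`‖fg‖_{Ḣ^{1/2}} ≤ C(‖f'‖_{L²}‖g‖_{L²} + ‖f‖_{L^∞}‖g‖_{Ḣ^{1/2}})`. -/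
theorem statement8 : ∃ C : ℝ, 0 < C ∧ ∀ f g : SchwartzMap ℝ ℂ,
    Hhalf (fun α : ℝ => f α * g α)
      ≤ ENNReal.ofReal C *
        (eLpNorm (deriv (⇑f)) 2 volume * eLpNorm (⇑g) 2 volume
          + eLpNorm (⇑f) ⊤ volume * Hhalf (⇑g)) := by
  refine ⟨4, four_pos, fun f g => ?_⟩
  have hc : ENNReal.ofReal (1 / (2 * Real.pi)) ≤ 1 :=
    ENNReal.ofReal_le_one.2 <| by rw [div_le_one (by positivity)]; linarith [Real.pi_gt_three]
  rw [Hhalf_le_iff, ENNReal.ofReal_ofNat]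
  calc ENNReal.ofReal (1 / (2 * Real.pi)) * gagliardoEnergy (fun α => f α * g α)
      ≤ ENNReal.ofReal (1 / (2 * Real.pi)) * (2 * eLpNorm f ⊤ volume ^ 2 * gagliardoEnergy g
        + 8 * eLpNorm (deriv f) 2 volume ^ 2 * eLpNorm g 2 volume ^ 2) := by
        gcongr; exact gagliardoEnergy_mul_le (f.smooth 1) g.continuous
    _ ≤ 2 * eLpNorm f ⊤ volume ^ 2 * (ENNReal.ofReal (1 / (2 * Real.pi)) * gagliardoEnergy g)
        + 8 * eLpNorm (deriv f) 2 volume ^ 2 * eLpNorm g 2 volume ^ 2 := by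
        rw [mul_add, mul_left_comm]
        exact add_le_add le_rfl (mul_le_of_le_one_left zero_le hc)
    _ = 2 * (eLpNorm f ⊤ volume * Hhalf g) ^ 2
        + 8 * (eLpNorm (deriv f) 2 volume * eLpNorm g 2 volume) ^ 2 := by
        rw [mul_pow, Hhalf_sq]; ring
    _ ≤ _ := two_mul_sq_add_eight_mul_sq_le _ _
end

section
/- There exists a universal constant C > 0 with the following property: for all complex-valued Schwartz functions f, g ∈ 𝒮(ℝ) and every bounded continuously differentiable REAL-valued function w : ℝ → ℝ with w' ∈ L²(ℝ), one has ‖f·g·w‖_{L²(ℝ)} ≤ C·( ‖f·w‖_{Ḣ^{1/2}}·‖g‖_{L²(ℝ)} + ‖g·w‖_{Ḣ^{1/2}}·‖f‖_{L²(ℝ)} + ‖f‖_{L²(ℝ)}·‖g‖_{L²(ℝ)}·‖w'‖_{L²(ℝ)} ), the inequality being interpreted in [0,∞]. -/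
/-!
Write `F = w • u` and fix `α`. Averaging the identity
`F α = (F α - F β) + w α • u β - (w α - w β) • u β` over `β ∈ [α, α + t²]` and applying
Cauchy–Schwarz bounds `‖F α‖` by `t · D(α)^{1/2} + |w α| ‖u‖₂ / t + ‖w'‖₂ ‖u‖₂`, where
`D(α) = ∫ ‖F α - F β‖² / (α - β)² dβ`, since `w` is `1/2`-Hölder with constant `‖w'‖₂`.
Optimizing in `t`, multiplying by `|g α|` and integrating (Minkowski, then Cauchy–Schwarz in `α`)
gives `‖f g w‖₂ ≤ 2 (‖f‖₂ [f w] ‖g g w‖₂)^{1/2} + ‖w'‖₂ ‖f‖₂ ‖g‖₂`, with `[·]` the Gagliardo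
seminorm. For `f = g` this is a quadratic inequality for the finite number `‖g g w‖₂`; solving it
and substituting back gives the claim with `C = 15`.
-/

open MeasureTheory Complex
open scoped ENNReal NNReal

namespace ENNReal

theorem mul_self_rpow_half (a : ℝ≥0∞) : (a * a) ^ (1/2 : ℝ) = a := by
  rw [mul_rpow_of_nonneg _ _ (by norm_num), ← rpow_add_of_nonneg _ _ (by norm_num) (by norm_num)]
  norm_num

theorem rpow_half_le_of_le_mul_self {x y : ℝ≥0∞} (h : x ≤ y * y) : x ^ (1/2 : ℝ) ≤ y :=
  (rpow_le_rpow h (by norm_num)).trans_eq (mul_self_rpow_half y)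

theorem le_two_mul_rpow_half_add_of_forall_le {x a b r : ℝ≥0∞} (hb : b ≠ ∞) (hb0 : b ≠ 0)
    (h : ∀ t : ℝ≥0, 0 < t → x ≤ a * t + b * (t : ℝ≥0∞)⁻¹ + r) :
    x ≤ 2 * (a * b) ^ (1/2 : ℝ) + r := by
  lift b to ℝ≥0 using hb
  have hb0' : b ≠ 0 := by exact_mod_cast hb0
  rcases eq_or_ne a ∞ with rfl | ha
  · simp [top_mul hb0, top_rpow_of_pos]
  lift a to ℝ≥0 using ha
  rcases eq_or_ne a 0 with rfl | ha0
  · refine le_trans ?_ le_add_self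
    refine le_of_forall_pos_le_add fun ε hε _ => ?_
    have hbε : 0 < b / ε := div_pos (pos_iff_ne_zero.2 hb0') hε
    refine (h _ hbε).trans (le_of_eq ?_)
    rw [← coe_inv hbε.ne', inv_div, coe_zero, zero_mul, zero_add, ← coe_mul,
      mul_div_cancel₀ _ hb0', add_comm]
  · have ht : 0 < NNReal.sqrt (b / a) :=
      NNReal.sqrt_pos.2 (div_pos (pos_iff_ne_zero.2 hb0') (pos_iff_ne_zero.2 ha0))
    refine (h _ ht).trans (le_of_eq ?_)
    have e1 : a * NNReal.sqrt (b / a) = NNReal.sqrt (a * b) := by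
      rw [← NNReal.sqrt_mul_self a, ← NNReal.sqrt_mul, NNReal.sqrt_mul_self]
      congr 1; field_simp
    have e2 : b * (NNReal.sqrt (b / a))⁻¹ = NNReal.sqrt (a * b) := by
      rw [← NNReal.sqrt_inv, ← NNReal.sqrt_mul_self b, ← NNReal.sqrt_mul, NNReal.sqrt_mul_self]
      congr 1; field_simp
    rw [← coe_inv ht.ne', ← coe_mul, ← coe_mul, e1, e2, ← coe_mul, NNReal.sqrt_eq_rpow,
      coe_rpow_of_nonneg _ (by norm_num), two_mul]

theorem le_four_mul_add_two_mul_of_le_two_mul_rpow_half_add {x k c : ℝ≥0∞} (hx : x ≠ ∞)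
    (h : x ≤ 2 * (k * x) ^ (1/2 : ℝ) + c) : x ≤ 4 * k + 2 * c := by
  rcases eq_or_ne k ∞ with rfl | hk
  · simp
  rcases eq_or_ne c ∞ with rfl | hc
  · simp
  lift x to ℝ≥0 using hx
  lift k to ℝ≥0 using hk
  lift c to ℝ≥0 using hc
  rw [← coe_mul, ← coe_rpow_of_nonneg _ (by norm_num), ← NNReal.sqrt_eq_rpow] at h
  have h' : (x : ℝ) ≤ 2 * Real.sqrt (k * x) + c := by
    rw [← NNReal.coe_mul, ← Real.coe_sqrt]; exact_mod_cast h
  have hsq := Real.sq_sqrt (mul_nonneg k.coe_nonneg x.coe_nonneg)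
  -- `2 √(k x) ≤ 2 k + x / 2`
  have : (x : ℝ) ≤ 4 * k + 2 * c := by
    nlinarith [Real.sqrt_nonneg (k * x), sq_nonneg (Real.sqrt (k * x) - 2 * k), k.coe_nonneg]
  exact_mod_cast this

/-- The closing algebra: `hx'` is the estimate for `(g, g)`, solved for `x = ‖g g w‖₂`, and `hn`
the estimate for `(f, g)`. -/
theorem le_five_mul_of_le_two_mul_rpow_half_add {n x a b p q c : ℝ≥0∞} (hx : x ≠ ∞)
    (hn : n ≤ 2 * (p * a * x) ^ (1/2 : ℝ) + c * p * q)
    (hx' : x ≤ 2 * (q * b * x) ^ (1/2 : ℝ) + c * q * q) :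
    n ≤ 5 * (a * q + b * p + p * q * c) := by
  set T := a * q + b * p + p * q * c
  have hx_le : x ≤ 4 * (q * b) + 2 * (c * q * q) :=
    le_four_mul_add_two_mul_of_le_two_mul_rpow_half_add hx hx'
  have hroot : (p * a * x) ^ (1/2 : ℝ) ≤ 2 * T := by
    refine rpow_half_le_of_le_mul_self ?_
    calc p * a * x ≤ p * a * (4 * (q * b) + 2 * (c * q * q)) := by gcongr
      _ = 4 * (a * q) * (b * p) + 2 * (a * q) * (p * q * c) := by ring
      _ ≤ 4 * (a * q) * (b * p) + 2 * (a * q) * (p * q * c)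
            + (4 * (a * q) ^ 2 + 4 * (b * p) ^ 2 + 4 * (p * q * c) ^ 2 + 4 * (a * q) * (b * p)
              + 6 * (a * q) * (p * q * c) + 8 * (b * p) * (p * q * c)) := le_self_add
      _ = 2 * T * (2 * T) := by ring
  calc n ≤ 2 * (2 * T) + T := by
        refine hn.trans (add_le_add (by gcongr) ?_)
        calc c * p * q = p * q * c := by ring
          _ ≤ T := le_add_self
    _ = 5 * T := by ring

end ENNReal

theorem setLIntegral_enorm_le_eLpNorm_two_mul {α E : Type*} [MeasurableSpace α] {μ : Measure α}
    [NormedAddCommGroup E] {φ : α → E} {s : Set α} (hφ : AEStronglyMeasurable φ (μ.restrict s)) :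
    ∫⁻ x in s, ‖φ x‖ₑ ∂μ ≤ eLpNorm φ 2 μ * μ s ^ (1/2 : ℝ) := by
  rw [← eLpNorm_one_eq_lintegral_enorm]
  calc eLpNorm φ 1 (μ.restrict s)
      ≤ eLpNorm φ 2 (μ.restrict s)
          * μ.restrict s Set.univ ^ (1 / (1 : ℝ≥0∞).toReal - 1 / (2 : ℝ≥0∞).toReal) :=
        eLpNorm_le_eLpNorm_mul_rpow_measure_univ (f := φ) (by norm_num) hφ
    _ ≤ eLpNorm φ 2 μ * μ s ^ (1/2 : ℝ) := by
        rw [Measure.restrict_apply_univ,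
          show 1 / (1 : ℝ≥0∞).toReal - 1 / (2 : ℝ≥0∞).toReal = (1/2 : ℝ) by norm_num]
        gcongr
        exact Measure.restrict_le_self

theorem eLpNorm_two_rpow_half {α : Type*} [MeasurableSpace α] {μ : Measure α} (φ : α → ℝ≥0∞) :
    eLpNorm (fun x => φ x ^ (1/2 : ℝ)) 2 μ = (∫⁻ x, φ x ∂μ) ^ (1/2 : ℝ) := by
  rw [eLpNorm_eq_lintegral_rpow_enorm_toReal (by norm_num) (by norm_num)]
  simp only [enorm_eq_self, ENNReal.toReal_ofNat, ← ENNReal.rpow_mul]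
  norm_num

theorem holderWith_of_memLp_deriv {E : Type*} [NormedAddCommGroup E] [NormedSpace ℝ E]
    [CompleteSpace E] {w : ℝ → E} (hw : Differentiable ℝ w) (hw' : MemLp (deriv w) 2 volume) :
    HolderWith (eLpNorm (deriv w) 2 volume).toNNReal (1/2) w := by
  have increment : ∀ a b : ℝ, a ≤ b →
      edist (w b) (w a) ≤ eLpNorm (deriv w) 2 volume * edist b a ^ (1/2 : ℝ) := by
    intro a b hab
    have ftc : ∫ y in a..b, deriv w y = w b - w a :=
      intervalIntegral.integral_deriv_eq_sub (fun x _ => hw x)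
        ((hw'.locallyIntegrable (by norm_num)).integrableOn_isCompact
          isCompact_uIcc).intervalIntegrable
    rw [edist_eq_enorm_sub, ← ftc, intervalIntegral.integral_of_le hab, edist_dist,
      Real.dist_eq, abs_of_nonneg (sub_nonneg.2 hab), ← Real.volume_Ioc]
    exact (enorm_integral_le_lintegral_enorm _).trans
      (setLIntegral_enorm_le_eLpNorm_two_mul hw'.1.restrict)
  intro x y
  rw [ENNReal.coe_toNNReal hw'.eLpNorm_ne_top]
  push_cast
  rcases le_total y x with h | h
  · exact increment y x h
  · rw [edist_comm, edist_comm x]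
    exact increment x y h

section Gagliardo

variable {E : Type*} [NormedAddCommGroup E]

noncomputable def gagliardoDensity (u : ℝ → E) (α : ℝ) : ℝ≥0∞ :=
  ∫⁻ β : ℝ, ENNReal.ofReal (‖u α - u β‖ ^ 2 / (α - β) ^ 2)

noncomputable def gagliardoSeminorm (u : ℝ → E) : ℝ≥0∞ :=
  (∫⁻ α, gagliardoDensity u α) ^ (1/2 : ℝ)

theorem measurable_gagliardoDensity {u : ℝ → E} (hu : Continuous u) :
    Measurable (gagliardoDensity u) :=
  Measurable.lintegral_prod_right'
    (f := fun p : ℝ × ℝ => ENNReal.ofReal (‖u p.1 - u p.2‖ ^ 2 / (p.1 - p.2) ^ 2)) (by fun_prop)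

theorem eLpNorm_differenceQuotient (u : ℝ → E) (α : ℝ) :
    eLpNorm (fun β => ‖u α - u β‖ / |α - β|) 2 volume = gagliardoDensity u α ^ (1/2 : ℝ) := by
  rw [eLpNorm_eq_lintegral_rpow_enorm_toReal (by norm_num) (by norm_num), gagliardoDensity]
  congr 1
  refine lintegral_congr fun β => ?_
  rw [Real.enorm_eq_ofReal (by positivity), ENNReal.ofReal_rpow_of_nonneg (by positivity)
    (by norm_num), ENNReal.toReal_ofNat, Real.rpow_two, div_pow, sq_abs]

theorem gagliardoSeminorm_le_three_mul_Hhalf (u : ℝ → E) : gagliardoSeminorm u ≤ 3 * Hhalf u := by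
  have hc : ENNReal.ofReal (2 * Real.pi) * ENNReal.ofReal (1 / (2 * Real.pi)) = 1 := by
    rw [← ENNReal.ofReal_mul (by positivity), mul_one_div_cancel (by positivity),
      ENNReal.ofReal_one]
  have h3 : ENNReal.ofReal (2 * Real.pi) ^ (1/2 : ℝ) ≤ 3 := by
    refine ENNReal.rpow_half_le_of_le_mul_self ?_
    rw [← ENNReal.ofReal_ofNat, ← ENNReal.ofReal_mul (by norm_num)]
    exact ENNReal.ofReal_le_ofReal (by linarith [Real.pi_lt_four])
  calc gagliardoSeminorm u
      = (ENNReal.ofReal (2 * Real.pi) * (ENNReal.ofReal (1 / (2 * Real.pi))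
          * ∫⁻ α, gagliardoDensity u α)) ^ (1/2 : ℝ) := by
        rw [← mul_assoc, hc, one_mul, gagliardoSeminorm]
    _ ≤ 3 * Hhalf u := by
        rw [ENNReal.mul_rpow_of_nonneg _ _ (by norm_num), Hhalf]
        exact mul_le_mul_left h3 _

theorem lintegral_rpow_half_gagliardoDensity_mul_le {F : Type*} [NormedAddCommGroup F]
    {u : ℝ → E} {h : ℝ → F} (hu : Continuous u) (hh : Continuous h) :
    ∫⁻ α, gagliardoDensity u α ^ (1/2 : ℝ) * ‖h α‖ₑ ≤ gagliardoSeminorm u * eLpNorm h 2 volume := by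
  refine (ENNReal.lintegral_mul_le_Lp_mul_Lq volume Real.HolderConjugate.two_two
    ((measurable_gagliardoDensity hu).pow_const _).aemeasurable
    hh.enorm.measurable.aemeasurable).trans (le_of_eq ?_)
  rw [eLpNorm_eq_lintegral_rpow_enorm_toReal (by norm_num) (by norm_num), gagliardoSeminorm]
  simp only [← ENNReal.rpow_mul, ENNReal.toReal_ofNat]
  norm_num

variable [NormedSpace ℝ E]

theorem enorm_smul_le_of_abs_sub_le {u : ℝ → E} {w : ℝ → ℝ} {C : ℝ≥0}
    (hw : HolderWith C (1/2) w) {α β : ℝ} {t : ℝ≥0} (hαβ : |α - β| ≤ (t : ℝ) ^ 2) :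
    ‖w α • u α‖ₑ ≤ ((t ^ 2 : ℝ≥0) : ℝ≥0∞) * ‖‖w α • u α - w β • u β‖ / |α - β|‖ₑ
      + ‖w α‖ₑ * ‖u β‖ₑ + C * t * ‖u β‖ₑ := by
  set q := ‖w α • u α - w β • u β‖ / |α - β|
  have hdiff : ‖w α • u α - w β • u β‖ₑ ≤ ((t ^ 2 : ℝ≥0) : ℝ≥0∞) * ‖q‖ₑ := by
    rcases eq_or_ne β α with rfl | hne
    · simp
    have hpos : 0 < |α - β| := abs_pos.2 (sub_ne_zero.2 hne.symm)
    have : ‖w α • u α - w β • u β‖ ≤ (t : ℝ) ^ 2 * q :=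
      calc ‖w α • u α - w β • u β‖ = |α - β| * q := (mul_div_cancel₀ _ hpos.ne').symm
        _ ≤ (t : ℝ) ^ 2 * q := by gcongr
    rw [← ofReal_norm, Real.enorm_eq_ofReal (by positivity), ← ENNReal.ofReal_coe_nnreal,
      NNReal.coe_pow, ← ENNReal.ofReal_mul (by positivity)]
    exact ENNReal.ofReal_le_ofReal this
  have hw_inc : ‖w α - w β‖ₑ ≤ C * t := by
    have h := hw.edist_le α β
    push_cast at h
    rw [← edist_eq_enorm_sub, ← ENNReal.mul_self_rpow_half t]
    refine h.trans ?_
    gcongr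
    rw [edist_dist, Real.dist_eq, ← ENNReal.coe_mul, ← ENNReal.ofReal_coe_nnreal]
    exact ENNReal.ofReal_le_ofReal (by simpa [sq] using hαβ)
  calc ‖w α • u α‖ₑ = ‖(w α • u α - w β • u β) + w α • u β - (w α - w β) • u β‖ₑ := by
        rw [sub_smul]; abel_nf
    _ ≤ ‖w α • u α - w β • u β‖ₑ + ‖w α • u β‖ₑ + ‖(w α - w β) • u β‖ₑ :=
        enorm_sub_le.trans (by gcongr; exact enorm_add_le _ _)
    _ ≤ _ := by
        rw [enorm_smul, enorm_smul]
        gcongr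

theorem enorm_smul_le_of_holderWith_of_pos {u : ℝ → E} {w : ℝ → ℝ} {C : ℝ≥0} (hu : Continuous u)
    (hw : HolderWith C (1/2) w) (α : ℝ) {t : ℝ≥0} (ht : 0 < t) :
    ‖w α • u α‖ₑ ≤ gagliardoDensity (fun x => w x • u x) α ^ (1/2 : ℝ) * t
      + ‖w α‖ₑ * eLpNorm u 2 volume * (t : ℝ≥0∞)⁻¹ + C * eLpNorm u 2 volume := by
  have hF : Continuous fun x => w x • u x := (hw.continuous (by norm_num)).smul hu
  set q : ℝ → ℝ := fun β => ‖w α • u α - w β • u β‖ / |α - β|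
  have hq : Measurable q := ((continuous_const.sub hF).norm.measurable).div
    (continuous_const.sub continuous_id).abs.measurable
  have hu_m : Measurable fun β => ‖u β‖ₑ := hu.enorm.measurable
  set s := Set.Icc α (α + (t : ℝ) ^ 2)
  have hs : volume s = ((t ^ 2 : ℝ≥0) : ℝ≥0∞) := by
    rw [Real.volume_Icc, add_sub_cancel_left, ← NNReal.coe_pow, ENNReal.ofReal_coe_nnreal]
  have hs_half : volume s ^ (1/2 : ℝ) = t := by
    rw [hs, ENNReal.coe_pow, sq, ENNReal.mul_self_rpow_half]
  have hu_s := setLIntegral_enorm_le_eLpNorm_two_mul (μ := volume) (s := s) hu.aestronglyMeasurable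
  have hq_s := setLIntegral_enorm_le_eLpNorm_two_mul (μ := volume) (s := s) hq.aestronglyMeasurable
  rw [hs_half] at hu_s
  rw [show eLpNorm q 2 volume = _ from eLpNorm_differenceQuotient (fun x => w x • u x) α,
    hs_half] at hq_s
  set D := gagliardoDensity (fun x => w x • u x) α
  set N := eLpNorm u 2 volume
  have htt : (t : ℝ≥0∞) * (t : ℝ≥0∞)⁻¹ = 1 :=
    ENNReal.mul_inv_cancel (by exact_mod_cast ht.ne') ENNReal.coe_ne_top
  have key : ((t ^ 2 : ℝ≥0) : ℝ≥0∞) * ‖w α • u α‖ₑ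
      ≤ ((t ^ 2 : ℝ≥0) : ℝ≥0∞) * (D ^ (1/2 : ℝ) * t + ‖w α‖ₑ * N * (t : ℝ≥0∞)⁻¹ + C * N) :=
    calc ((t ^ 2 : ℝ≥0) : ℝ≥0∞) * ‖w α • u α‖ₑ = ∫⁻ _ in s, ‖w α • u α‖ₑ := by
          rw [setLIntegral_const, hs, mul_comm]
      _ ≤ ∫⁻ β in s, (((t ^ 2 : ℝ≥0) : ℝ≥0∞) * ‖q β‖ₑ + ‖w α‖ₑ * ‖u β‖ₑ + C * t * ‖u β‖ₑ) := by
          refine setLIntegral_mono' measurableSet_Icc fun β hβ => enorm_smul_le_of_abs_sub_le hw ?_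
          rw [abs_sub_comm, abs_of_nonneg (sub_nonneg.2 hβ.1)]
          linarith [hβ.2]
      _ = ((t ^ 2 : ℝ≥0) : ℝ≥0∞) * (∫⁻ β in s, ‖q β‖ₑ) + ‖w α‖ₑ * (∫⁻ β in s, ‖u β‖ₑ)
            + C * t * ∫⁻ β in s, ‖u β‖ₑ := by
          rw [lintegral_add_left (by fun_prop), lintegral_add_left (by fun_prop),
            lintegral_const_mul _ hq.enorm, lintegral_const_mul _ hu_m, lintegral_const_mul _ hu_m]
      _ ≤ ((t ^ 2 : ℝ≥0) : ℝ≥0∞) * (D ^ (1/2 : ℝ) * t) + ‖w α‖ₑ * (N * t) + C * t * (N * t) := by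
          gcongr
      _ = ((t : ℝ≥0∞) ^ 2 * (D ^ (1/2 : ℝ) * t)) + ‖w α‖ₑ * N * t * 1
            + (t : ℝ≥0∞) ^ 2 * (C * N) := by
          rw [ENNReal.coe_pow]; ring
      _ = ((t ^ 2 : ℝ≥0) : ℝ≥0∞) * (D ^ (1/2 : ℝ) * t + ‖w α‖ₑ * N * (t : ℝ≥0∞)⁻¹ + C * N) := by
          rw [← htt, ENNReal.coe_pow]; ring
  exact (ENNReal.mul_le_mul_iff_right (by simp [ht.ne']) ENNReal.coe_ne_top).1 key

theorem enorm_smul_le_of_holderWith {u : ℝ → E} {w : ℝ → ℝ} {C : ℝ≥0} (hu : Continuous u)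
    (hu2 : eLpNorm u 2 volume ≠ ∞) (hw : HolderWith C (1/2) w) (α : ℝ) :
    ‖w α • u α‖ₑ ≤ 2 * (gagliardoDensity (fun x => w x • u x) α ^ (1/2 : ℝ)
      * (‖w α‖ₑ * eLpNorm u 2 volume)) ^ (1/2 : ℝ) + C * eLpNorm u 2 volume := by
  by_cases hb : ‖w α‖ₑ * eLpNorm u 2 volume = 0
  · suffices ‖w α‖ₑ * ‖u α‖ₑ = 0 by rw [enorm_smul, this]; exact zero_le
    rcases mul_eq_zero.1 hb with h | h
    · rw [h, zero_mul]
    · have hu0 : u = 0 := (Continuous.ae_eq_iff_eq volume hu continuous_const).1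
        ((eLpNorm_eq_zero_iff hu.aestronglyMeasurable two_ne_zero).1 h)
      simp [hu0]
  exact ENNReal.le_two_mul_rpow_half_add_of_forall_le (ENNReal.mul_ne_top enorm_ne_top hu2) hb
    fun t ht => enorm_smul_le_of_holderWith_of_pos hu hw α ht

end Gagliardo

theorem enorm_mul_mul_le_of_holderWith {f g : ℝ → ℂ} {w : ℝ → ℝ} {C : ℝ≥0} (hf : Continuous f)
    (hf2 : eLpNorm f 2 volume ≠ ∞) (hw : HolderWith C (1/2) w) (α : ℝ) :
    ‖f α * g α * w α‖ₑ ≤ 2 * (eLpNorm f 2 volume * (gagliardoDensity (fun x => f x * w x) α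
        ^ (1/2 : ℝ) * ‖g α * g α * w α‖ₑ)) ^ (1/2 : ℝ) + C * eLpNorm f 2 volume * ‖g α‖ₑ := by
  have hfw : (fun x => w x • f x) = fun x => f x * w x := by
    ext x; rw [Complex.real_smul, mul_comm]
  have enorm_w : ‖(w α : ℂ)‖ₑ = ‖w α‖ₑ := by rw [← ofReal_norm, Complex.norm_real, ofReal_norm]
  have h := enorm_smul_le_of_holderWith hf hf2 hw α
  rw [hfw, enorm_smul] at h
  set N := eLpNorm f 2 volume
  set D := gagliardoDensity (fun x => f x * w x) α
  calc ‖f α * g α * w α‖ₑ = ‖g α‖ₑ * (‖w α‖ₑ * ‖f α‖ₑ) := by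
        rw [enorm_mul, enorm_mul, enorm_w]; ring
    _ ≤ ‖g α‖ₑ * (2 * (D ^ (1/2 : ℝ) * (‖w α‖ₑ * N)) ^ (1/2 : ℝ) + C * N) := by gcongr
    _ = _ := by
        rw [enorm_mul, enorm_mul, enorm_w,
          show N * (D ^ (1/2 : ℝ) * (‖g α‖ₑ * ‖g α‖ₑ * ‖w α‖ₑ))
            = (‖g α‖ₑ * ‖g α‖ₑ) * (D ^ (1/2 : ℝ) * (‖w α‖ₑ * N)) by ring,
          ENNReal.mul_rpow_of_nonneg (‖g α‖ₑ * ‖g α‖ₑ) _ (by norm_num),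
          ENNReal.mul_self_rpow_half]
        ring

theorem eLpNorm_mul_mul_le_of_holderWith {f g : ℝ → ℂ} {w : ℝ → ℝ} {C : ℝ≥0} (hf : Continuous f)
    (hf2 : eLpNorm f 2 volume ≠ ∞) (hg : Continuous g) (hw : HolderWith C (1/2) w) :
    eLpNorm (fun α => f α * g α * w α) 2 volume
      ≤ 2 * (eLpNorm f 2 volume * gagliardoSeminorm (fun α => f α * w α)
          * eLpNorm (fun α => g α * g α * w α) 2 volume) ^ (1/2 : ℝ)
        + C * eLpNorm f 2 volume * eLpNorm g 2 volume := by
  have hwc : Continuous w := hw.continuous (by norm_num)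
  set N := eLpNorm f 2 volume
  set R : ℝ → ℝ≥0∞ := fun α => (N * (gagliardoDensity (fun x => f x * w x) α ^ (1/2 : ℝ)
    * ‖g α * g α * w α‖ₑ)) ^ (1/2 : ℝ)
  have hR : Measurable R :=
    ((((measurable_gagliardoDensity (by fun_prop)).pow_const _).mul
      (by fun_prop)).const_mul N).pow_const _
  calc eLpNorm (fun α => f α * g α * w α) 2 volume
      ≤ eLpNorm ((fun α => 2 * R α) + fun α => C * N * ‖g α‖ₑ) 2 volume :=
        eLpNorm_mono_enorm fun α => by
          rw [Pi.add_apply, enorm_eq_self]; exact enorm_mul_mul_le_of_holderWith hf hf2 hw α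
    _ ≤ eLpNorm (fun α => 2 * R α) 2 volume + eLpNorm (fun α => C * N * ‖g α‖ₑ) 2 volume :=
        eLpNorm_add_le (hR.const_mul 2).aestronglyMeasurable
          (hg.enorm.measurable.const_mul _).aestronglyMeasurable one_le_two
    _ ≤ 2 * eLpNorm R 2 volume + C * N * eLpNorm g 2 volume := by
        gcongr
        · exact eLpNorm_le_mul_eLpNorm_of_ae_le_mul'' 2 hR.aestronglyMeasurable
            (ae_of_all _ fun α => by rw [enorm_eq_self, enorm_eq_self])
        · exact eLpNorm_le_mul_eLpNorm_of_ae_le_mul'' 2 hg.aestronglyMeasurable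
            (ae_of_all _ fun α => by rw [enorm_eq_self])
    _ ≤ _ := by
        rw [eLpNorm_two_rpow_half, lintegral_const_mul' _ _ hf2, mul_assoc N]
        gcongr
        exact lintegral_rpow_half_gagliardoDensity_mul_le (by fun_prop) (by fun_prop)

theorem SchwartzMap.memLp_two_mul_self_mul (g : SchwartzMap ℝ ℂ) {w : ℝ → ℝ} (hw : Continuous w)
    {A : ℝ} (hA : ∀ α, |w α| ≤ A) : MemLp (fun α => g α * g α * (w α : ℂ)) 2 volume := by
  have hw_top : MemLp (fun α => (w α : ℂ)) ⊤ volume :=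
    memLp_top_of_bound (by fun_prop : Continuous fun α => (w α : ℂ)).aestronglyMeasurable A
      (ae_of_all _ fun α => by rw [Complex.norm_real, Real.norm_eq_abs]; exact hA α)
  have h := ((g.memLp 2 : MemLp g 2 volume).mul' (r := 2)
    (g.memLp ⊤ : MemLp g ⊤ volume)).mul' (r := 2) hw_top
  convert h using 2 with α
  ring

/-- there is a universal `C > 0` so that for Schwartz `f, g` and every
bounded real-valued `C¹` function `w` with `w' ∈ L²`,
`‖fgw‖_{L²} ≤ C(‖fw‖_{Ḣ^{1/2}}‖g‖_{L²} + ‖gw‖_{Ḣ^{1/2}}‖f‖_{L²} + ‖f‖_{L²}‖g‖_{L²}‖w'‖_{L²})`. -/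
theorem statement16 : ∃ C : ℝ, 0 < C ∧
    ∀ (f g : SchwartzMap ℝ ℂ) (w : ℝ → ℝ),
      ContDiff ℝ 1 w → (∃ A : ℝ, ∀ α : ℝ, |w α| ≤ A) →
      MemLp (deriv w) 2 volume →
      eLpNorm (fun α : ℝ => f α * g α * ((w α : ℝ) : ℂ)) 2 volume
        ≤ ENNReal.ofReal C *
            (Hhalf (fun α : ℝ => f α * ((w α : ℝ) : ℂ)) * eLpNorm (⇑g) 2 volume
              + Hhalf (fun α : ℝ => g α * ((w α : ℝ) : ℂ)) * eLpNorm (⇑f) 2 volume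
              + eLpNorm (⇑f) 2 volume * eLpNorm (⇑g) 2 volume *
                  eLpNorm (deriv w) 2 volume) := by
  refine ⟨15, by norm_num, fun f g w hw ⟨A, hA⟩ hw' => ?_⟩
  have hH := holderWith_of_memLp_deriv (hw.differentiable one_ne_zero) hw'
  have hf2 : MemLp f 2 volume := f.memLp 2
  have hg2 : MemLp g 2 volume := g.memLp 2
  have hggw := g.memLp_two_mul_self_mul hw.continuous hA
  have hfg := eLpNorm_mul_mul_le_of_holderWith f.continuous hf2.eLpNorm_ne_top g.continuous hH
  have hgg := eLpNorm_mul_mul_le_of_holderWith g.continuous hg2.eLpNorm_ne_top g.continuous hH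
  rw [ENNReal.coe_toNNReal hw'.eLpNorm_ne_top] at hfg hgg
  set p := eLpNorm f 2 volume
  set q := eLpNorm g 2 volume
  set c := eLpNorm (deriv w) 2 volume
  calc _ ≤ 5 * (gagliardoSeminorm (fun α => f α * (w α : ℂ)) * q
          + gagliardoSeminorm (fun α => g α * (w α : ℂ)) * p + p * q * c) :=
        ENNReal.le_five_mul_of_le_two_mul_rpow_half_add hggw.eLpNorm_ne_top hfg hgg
    _ ≤ 5 * (3 * Hhalf (fun α => f α * (w α : ℂ)) * q
          + 3 * Hhalf (fun α => g α * (w α : ℂ)) * p + 3 * (p * q * c)) := by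
        gcongr 5 * (?_ * q + ?_ * p + ?_)
        · exact gagliardoSeminorm_le_three_mul_Hhalf _
        · exact gagliardoSeminorm_le_three_mul_Hhalf _
        · exact le_mul_of_one_le_left zero_le (by norm_num)
    _ = ENNReal.ofReal 15 * (Hhalf (fun α => f α * (w α : ℂ)) * q
          + Hhalf (fun α => g α * (w α : ℂ)) * p + p * q * c) := by
        rw [show ENNReal.ofReal 15 = 5 * 3 by norm_num]
        ring
end
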